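/- arXiv:2011.03660 — 2 statements merged into one kernel-verified Lean document; each statement's English description precedes it below -/
import Mathlib

section
/- For every n : ℕ, the possible type systems vₙ and τₙ defined by the universe hierarchy construction are type systems. -/
/- Cost-Aware Type Theory (Niu & Harper): the language λᶜ, its operational
   semantics, PER semantics and the type-system construction. -/

namespace CATT

/-- Syntax of the language λᶜ (de Bruijn indices; `lam` binds two variables:
index 1 is the recursion variable `f`, index 0 is the argument `a`). -/
inductive Exp : Type
  | var : ℕ → Exp
  | funtime : Exp → Exp → Exp → Exp
  | pi : Exp → Exp → Exp
  | lam : Exp → Exp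
  | app : Exp → Exp → Exp
  | nat : Exp
  | zero : Exp
  | suc : Exp → Exp
  | ifz : Exp → Exp → Exp → Exp
  | sigma : Exp → Exp → Exp
  | pair : Exp → Exp → Exp
  | fst : Exp → Exp
  | snd : Exp → Exp
  | eqty : Exp → Exp → Exp → Exp
  | triv : Exp
  | subset : Exp → Exp → Exp
  | letc : Exp → Exp → Exp
  | univ : ℕ → Exp
  | rel2 : (ℕ → ℕ → Prop) → Exp → Exp → Exp
  | rel3 : (ℕ → ℕ → ℕ → Prop) → Exp → Exp → Exp → Exp
  | cff1 : (ℕ → ℕ) → Exp → Exp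
  | cff2 : (ℕ → ℕ → ℕ) → Exp → Exp → Exp

open Exp

/-- Substitution of a closed term `v` for variable `k`
(variables above `k` are decremented). -/
def subst : Exp → ℕ → Exp → Exp
  | var n, k, v => if n = k then v else if k < n then var (n-1) else var n
  | funtime A B P, k, v => funtime (subst A k v) (subst B (k+1) v) (subst P (k+1) v)
  | pi A B, k, v => pi (subst A k v) (subst B (k+1) v)
  | lam N, k, v => lam (subst N (k+2) v)
  | app M N, k, v => app (subst M k v) (subst N k v)
  | nat, _, _ => nat
  | zero, _, _ => zero
  | suc M, k, v => suc (subst M k v)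
  | ifz M M0 M1, k, v => ifz (subst M k v) (subst M0 k v) (subst M1 (k+1) v)
  | sigma A B, k, v => sigma (subst A k v) (subst B (k+1) v)
  | pair M N, k, v => pair (subst M k v) (subst N k v)
  | fst M, k, v => fst (subst M k v)
  | snd M, k, v => snd (subst M k v)
  | eqty A M N, k, v => eqty (subst A k v) (subst M k v) (subst N k v)
  | triv, _, _ => triv
  | subset A B, k, v => subset (subst A k v) (subst B (k+1) v)
  | letc M N, k, v => letc (subst M k v) (subst N (k+1) v)
  | univ i, _, _ => univ i
  | rel2 r M N, k, v => rel2 r (subst M k v) (subst N k v)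
  | rel3 r M N O, k, v => rel3 r (subst M k v) (subst N k v) (subst O k v)
  | cff1 f M, k, v => cff1 f (subst M k v)
  | cff2 f M N, k, v => cff2 f (subst M k v) (subst N k v)

/-- The values of λᶜ. -/
inductive IsVal : Exp → Prop
  | funtime : ∀ A B P, IsVal (funtime A B P)
  | pi : ∀ A B, IsVal (pi A B)
  | lam : ∀ N, IsVal (lam N)
  | nat : IsVal nat
  | zero : IsVal zero
  | suc : ∀ {V}, IsVal V → IsVal (suc V)
  | sigma : ∀ A B, IsVal (sigma A B)
  | pair : ∀ {V U}, IsVal V → IsVal U → IsVal (pair V U)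
  | eqty : ∀ A M N, IsVal (eqty A M N)
  | triv : IsVal triv
  | subset : ∀ A B, IsVal (subset A B)
  | univ : ∀ i, IsVal (univ i)
  | rel2 : ∀ r M N, IsVal (rel2 r M N)
  | rel3 : ∀ r M N O, IsVal (rel3 r M N O)

/-- Numerals `n̄ = sucⁿ zero`. -/
def num : ℕ → Exp
  | 0 => zero
  | n+1 => suc (num n)

/-- Call-by-value small-step structural operational semantics of λᶜ. -/
inductive Step : Exp → Exp → Prop
  | app1 {E1 E1' E2} : Step E1 E1' → Step (app E1 E2) (app E1' E2)
  | app2 {E1 E2 E2'} : IsVal E1 → Step E2 E2' → Step (app E1 E2) (app E1 E2')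
  | beta {N V} : IsVal V → Step (app (lam N) V) (subst (subst N 1 (lam N)) 0 V)
  | sucCong {E E'} : Step E E' → Step (suc E) (suc E')
  | ifzCong {E E' E0 E1} : Step E E' → Step (ifz E E0 E1) (ifz E' E0 E1)
  | ifzZero {E0 E1} : Step (ifz zero E0 E1) E0
  | ifzSuc {V E0 E1} : IsVal (suc V) → Step (ifz (suc V) E0 E1) (subst E1 0 V)
  | pair1 {E1 E1' E2} : Step E1 E1' → Step (pair E1 E2) (pair E1' E2)
  | pair2 {E1 E2 E2'} : IsVal E1 → Step E2 E2' → Step (pair E1 E2) (pair E1 E2')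
  | fstCong {E E'} : Step E E' → Step (fst E) (fst E')
  | sndCong {E E'} : Step E E' → Step (snd E) (snd E')
  | fstBeta {V U} : IsVal V → IsVal U → Step (fst (pair V U)) V
  | sndBeta {V U} : IsVal V → IsVal U → Step (snd (pair V U)) U
  | letc1 {E1 E1' E2} : Step E1 E1' → Step (letc E1 E2) (letc E1' E2)
  | letcBeta {V E2} : IsVal V → Step (letc V E2) (subst E2 0 V)
  | cff1Arg {f E E'} : Step E E' → Step (cff1 f E) (cff1 f E')
  | cff1Beta {f m} : Step (cff1 f (num m)) (num (f m))
  | cff2Arg1 {f E1 E1' E2} : Step E1 E1' → Step (cff2 f E1 E2) (cff2 f E1' E2)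
  | cff2Arg2 {f E1 E2 E2'} : IsVal E1 → Step E2 E2' → Step (cff2 f E1 E2) (cff2 f E1 E2')
  | cff2Beta {f m n} : Step (cff2 f (num m) (num n)) (num (f m n))

/-- `StepN c M N`: `M` transitions to `N` in exactly `c` steps. -/
inductive StepN : ℕ → Exp → Exp → Prop
  | refl (e) : StepN 0 e e
  | tail {c e e' e''} : Step e e' → StepN c e' e'' → StepN (c+1) e e''

/-- `M ⇓ᶜ V` : `M` evaluates to the value `V` in exactly `c` steps. -/
def EvalC (M : Exp) (c : ℕ) (V : Exp) : Prop := StepN c M V ∧ IsVal V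

/-- `M ⇓ V`. -/
def Eval (M V : Exp) : Prop := ∃ c, EvalC M c V

abbrev Rel := Exp → Exp → Prop

/-- Possible type systems: relations on Val × Val × P(Val × Val). -/
abbrev PTS := Set (Exp × Exp × Rel)

/-- Least fixed point (Knaster–Tarski) of an operator on sets. -/
def myLfp {β : Type _} (f : Set β → Set β) : Set β := sInf {s | f s ⊆ s}

/-- ω = μα. {(zero,zero)} ∪ {(suc v, suc v') | α(v,v')}. -/
def omegaSet : Set (Exp × Exp) :=
  myLfp (fun α => {p | p = (zero, zero) ∨ ∃ u u', (u, u') ∈ α ∧ p = (suc u, suc u')})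

def omegaRel : Rel := fun v v' => (v, v') ∈ omegaSet

/-- `A ~ A' ↓ α ∈ τ`. -/
def sameType (A A' : Exp) (α : Rel) (τ : PTS) : Prop :=
  ∃ A0 A0', Eval A A0 ∧ Eval A' A0' ∧ (A0, A0', α) ∈ τ

/-- `M ≐ M' ∈ α` (lifting along evaluation). -/
def sameComp (M M' : Exp) (α : Rel) : Prop :=
  ∃ V V', Eval M V ∧ Eval M' V' ∧ α V V'

/-- `a : α ▷ B ~ B' ↓ β ∈ τ`. -/
def sameTypeFam (α : Rel) (B B' : Exp) (β : Exp → Exp → Rel) (τ : PTS) : Prop :=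
  ∀ V V', α V V' → sameType (subst B 0 V) (subst B' 0 V') (β V V') τ

/-- `a : α ⊨ N ≐ N' ∈ β`. -/
def sameCompOpen (α : Rel) (N N' : Exp) (β : Exp → Exp → Rel) : Prop :=
  ∀ V V', α V V' → sameComp (subst N 0 V) (subst N' 0 V') (β V V')

/-- `M ≐ M' ∈ α [P]` : cost-aware membership. -/
def sameCComp (M M' : Exp) (α : Rel) (P : Exp) : Prop :=
  sameComp P P omegaRel ∧
  ∃ c c' V V' p, EvalC M c V ∧ EvalC M' c' V' ∧ α V V' ∧ Eval P (num p) ∧ max c c' ≤ p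

/-- `a : α ⊨ N ≐ N' ∈ β [P]`. -/
def sameCCompOpen (α : Rel) (N N' : Exp) (β : Exp → Exp → Rel) (P : Exp) : Prop :=
  sameCompOpen α P P (fun _ _ => omegaRel) ∧
  ∀ V V', α V V' → sameCComp (subst N 0 V) (subst N' 0 V') (β V V') (subst P 0 V)

/-! The clauses of the `Types` operator. -/

def NatCl : PTS := {x | x.1 = nat ∧ x.2.1 = nat ∧ x.2.2 = omegaRel}

def PiCl (τ : PTS) : PTS :=
  {x | ∃ A A' B B' α β, x.1 = pi A B ∧ x.2.1 = pi A' B' ∧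
    sameType A A' α τ ∧ sameTypeFam α B B' β τ ∧
    x.2.2 = fun F F' => ∃ N N', F = lam N ∧ F' = lam N' ∧
      sameCompOpen α (subst N 1 (lam N)) (subst N' 1 (lam N')) β}

def FuntimeCl (τ : PTS) : PTS :=
  {x | ∃ A A' B B' P P' α β, x.1 = funtime A B P ∧ x.2.1 = funtime A' B' P' ∧
    sameType A A' α τ ∧ sameTypeFam α B B' β τ ∧
    sameCompOpen α P P' (fun _ _ => omegaRel) ∧
    x.2.2 = fun F F' => ∃ N N', F = lam N ∧ F' = lam N' ∧
      sameCCompOpen α (subst N 1 (lam N)) (subst N' 1 (lam N')) β P}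

def SigmaCl (τ : PTS) : PTS :=
  {x | ∃ A A' B B' α β, x.1 = sigma A B ∧ x.2.1 = sigma A' B' ∧
    sameType A A' α τ ∧ sameTypeFam α B B' β τ ∧
    x.2.2 = fun p p' => ∃ U V U' V', p = pair U V ∧ p' = pair U' V' ∧
      α U U' ∧ β U U' V V'}

def EqCl (τ : PTS) : PTS :=
  {x | ∃ A A' M M' N N' α, x.1 = eqty A M N ∧ x.2.1 = eqty A' M' N' ∧
    sameType A A' α τ ∧ sameComp M M' α ∧ sameComp N N' α ∧
    x.2.2 = fun t t' => t = triv ∧ t' = triv ∧ sameComp M N α}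

def SubsetCl (τ : PTS) : PTS :=
  {x | ∃ A A' B B' α β, x.1 = subset A B ∧ x.2.1 = subset A' B' ∧
    sameType A A' α τ ∧ sameTypeFam α B B' β τ ∧
    x.2.2 = fun V V' => α V V' ∧ ∃ U U', β V V' U U'}

def Rel2Cl : PTS :=
  {x | ∃ r M M' N N', x.1 = rel2 r M N ∧ x.2.1 = rel2 r M' N' ∧
    sameComp M M' omegaRel ∧ sameComp N N' omegaRel ∧
    x.2.2 = fun t t' => t = triv ∧ t' = triv ∧
      ∃ m n, r m n ∧ sameComp M (num m) omegaRel ∧ sameComp N (num n) omegaRel}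

def Rel3Cl : PTS :=
  {x | ∃ r M M' N N' O O', x.1 = rel3 r M N O ∧ x.2.1 = rel3 r M' N' O' ∧
    sameComp M M' omegaRel ∧ sameComp N N' omegaRel ∧ sameComp O O' omegaRel ∧
    x.2.2 = fun t t' => t = triv ∧ t' = triv ∧
      ∃ m n o, r m n o ∧ sameComp M (num m) omegaRel ∧
        sameComp N (num n) omegaRel ∧ sameComp O (num o) omegaRel}

/-- The monotone operator `Types(v, τ)` closing `τ` under the type constructors
    and adding the universes of `v`. -/
def TypesOp (v τ : PTS) : PTS :=
  NatCl ∪ PiCl τ ∪ FuntimeCl τ ∪ SigmaCl τ ∪ EqCl τ ∪ SubsetCl τ ∪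
    Rel2Cl ∪ Rel3Cl ∪ v

/-- A possible type system is a type system when it satisfies unicity,
    PER valuation, symmetry and transitivity. -/
def IsTypeSystem (τ : PTS) : Prop :=
  (∀ A B φ φ', (A, B, φ) ∈ τ → (A, B, φ') ∈ τ → φ = φ') ∧
  (∀ A B φ, (A, B, φ) ∈ τ → Symmetric φ ∧ Transitive φ) ∧
  (∀ A B φ, (A, B, φ) ∈ τ → (B, A, φ) ∈ τ) ∧
  (∀ A B C φ, (A, B, φ) ∈ τ → (B, C, φ) ∈ τ → (A, C, φ) ∈ τ)

/-- The hierarchy `τₙ = μτ. Types(vₙ, τ)`, by strong recursion on `n`. -/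
def tau : ℕ → PTS := fun n =>
  Nat.strongRecOn n (fun n ih =>
    myLfp (TypesOp {x | ∃ i, ∃ h : i < n,
      x = (univ i, univ i, fun A B => ∃ α, (A, B, α) ∈ ih i h)}))

/-- `vₙ`: the universes below level `n`. -/
def vN (n : ℕ) : PTS :=
  {x | ∃ i, i < n ∧ x = (univ i, univ i, fun A B => ∃ α, (A, B, α) ∈ tau i)}

/-- `τₙ = μτ. Types(vₙ, τ)`. -/
def tauN (n : ℕ) : PTS := myLfp (TypesOp (vN n))

/-- `v_ω`: all universes. -/
def vOmega : PTS :=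
  {x | ∃ i, x = (univ i, univ i, fun A B => ∃ α, (A, B, α) ∈ tau i)}

/-- `τ_ω = μτ. Types(v_ω, τ)`. -/
def tauOmega : PTS := myLfp (TypesOp vOmega)

end CATT

namespace CATT
open Exp

lemma isVal_num : ∀ m, IsVal (num m)
  | 0 => IsVal.zero
  | m+1 => IsVal.suc (isVal_num m)

lemma num_inj : ∀ {m n : ℕ}, num m = num n → m = n := by
  intro m
  induction m with
  | zero => intro n h; cases n with
    | zero => rfl
    | succ n => simp [num] at h
  | succ m ih => intro n h; cases n with
    | zero => simp [num] at h
    | succ n => simp only [num, Exp.suc.injEq] at h; rw [ih h]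

lemma val_not_step : ∀ {v e}, Step v e → IsVal v → False := by
  intro v e h
  induction h <;> intro hv <;> cases hv <;> simp_all

lemma flip_val_not_step : ∀ {v e}, IsVal v → Step v e → False :=
  fun hv hs => val_not_step hs hv

lemma step_det : ∀ {M N N'}, Step M N → Step M N' → N = N' := by
  intro M N N' h
  induction h generalizing N'
  case cff1Beta f m =>
    intro h'
    obtain ⟨w, hw⟩ : ∃ w, num m = w := ⟨_, rfl⟩
    rw [hw] at h'
    cases h'
    case cff1Arg => exact (val_not_step ‹_› (hw ▸ isVal_num m)).elim
    case cff1Beta m' => rw [num_inj hw]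
  case cff2Beta f m n =>
    intro h'
    obtain ⟨w, hw⟩ : ∃ w, num m = w := ⟨_, rfl⟩
    obtain ⟨u, hu⟩ : ∃ u, num n = u := ⟨_, rfl⟩
    rw [hw, hu] at h'
    cases h'
    case cff2Arg1 => exact (val_not_step ‹_› (hw ▸ isVal_num m)).elim
    case cff2Arg2 => exact (val_not_step ‹_› (hu ▸ isVal_num n)).elim
    case cff2Beta m' n' => rw [num_inj hw, num_inj hu]
  all_goals
    intro h' <;> cases h' <;>
      first
        | rfl
        | (exfalso; apply val_not_step <;>
            first
              | assumption
              | exact IsVal.lam _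
              | exact IsVal.pair ‹_› ‹_›
              | exact IsVal.zero
              | exact IsVal.suc ‹_›
              | exact isVal_num _)
        | (exfalso; apply flip_val_not_step <;> assumption)
        | (congr 1 <;> first | rfl | (apply_assumption; assumption))

lemma stepN_det : ∀ {c c' M V V'}, StepN c M V → StepN c' M V' →
    IsVal V → IsVal V' → c = c' ∧ V = V' := by
  intro c c' M V V' h
  induction h generalizing c' with
  | refl e =>
    intro h2 hv hv'
    cases h2 with
    | refl => exact ⟨rfl, rfl⟩
    | tail hs _ => exact (val_not_step hs hv).elim
  | tail hs _ ih =>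
    intro h2 hv hv'
    cases h2 with
    | refl => exact (val_not_step hs hv').elim
    | tail hs2 h2' =>
      have he := step_det hs hs2
      subst he
      obtain ⟨e1, e2⟩ := ih h2' hv hv'
      exact ⟨by rw [e1], e2⟩

lemma evalC_det {M c c' V V'} (h : EvalC M c V) (h' : EvalC M c' V') :
    c = c' ∧ V = V' := stepN_det h.1 h'.1 h.2 h'.2

lemma eval_det {M V V'} (h : Eval M V) (h' : Eval M V') : V = V' := by
  obtain ⟨c, hc⟩ := h; obtain ⟨c', hc'⟩ := h'
  exact (evalC_det hc hc').2

lemma eval_val {V} (hv : IsVal V) : Eval V V := ⟨0, StepN.refl V, hv⟩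

lemma eval_val_eq {V W} (hv : IsVal V) (h : Eval V W) : W = V :=
  eval_det h (eval_val hv)

lemma eval_isVal {M V} (h : Eval M V) : IsVal V := by
  obtain ⟨c, _, hv⟩ := h; exact hv

/-! ### Knaster–Tarski facts for `myLfp` -/

lemma myLfp_le {β : Type _} {f : Set β → Set β} {s : Set β} (h : f s ⊆ s) :
    myLfp f ⊆ s := sInf_le h

lemma myLfp_prefix {β : Type _} {f : Set β → Set β} (hf : Monotone f) :
    f (myLfp f) ⊆ myLfp f := by
  apply le_sInf
  intro s hs
  exact subset_trans (hf (myLfp_le hs)) hs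

lemma myLfp_postfix {β : Type _} {f : Set β → Set β} (hf : Monotone f) :
    myLfp f ⊆ f (myLfp f) :=
  myLfp_le (hf (myLfp_prefix hf))

lemma myLfp_fixed {β : Type _} {f : Set β → Set β} (hf : Monotone f) :
    f (myLfp f) = myLfp f :=
  subset_antisymm (myLfp_prefix hf) (myLfp_postfix hf)

/-! ### The numeral PER ω -/

lemma omega_num (k : ℕ) : (num k, num k) ∈ omegaSet := by
  rw [omegaSet, myLfp]
  intro s hs
  simp only [Set.mem_setOf_eq] at hs
  induction k with
  | zero => exact hs (Or.inl rfl)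
  | succ k ih => exact hs (Or.inr ⟨num k, num k, ih, rfl⟩)

lemma omega_char {u u'} (h : (u, u') ∈ omegaSet) : ∃ k, u = num k ∧ u' = num k := by
  have hsub : omegaSet ⊆ {p : Exp × Exp | ∃ k, p.1 = num k ∧ p.2 = num k} := by
    apply myLfp_le
    rintro ⟨a, b⟩ (h | ⟨u, u', hu, hp⟩)
    · cases h; exact ⟨0, rfl, rfl⟩
    · obtain ⟨k, hk1, hk2⟩ := hu
      cases hp
      exact ⟨k + 1, by simp only [num]; exact congrArg _ hk1,
        by simp only [num]; exact congrArg _ hk2⟩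
  exact hsub h

lemma omegaRel_iff {u u'} : omegaRel u u' ↔ ∃ k, u = num k ∧ u' = num k := by
  constructor
  · exact fun h => omega_char h
  · rintro ⟨k, rfl, rfl⟩; exact omega_num k

lemma omegaRel_symm : Symmetric omegaRel := by
  intro u u' h
  obtain ⟨k, rfl, rfl⟩ := omegaRel_iff.1 h
  exact omega_num k

lemma omegaRel_trans : Transitive omegaRel := by
  intro u u' u'' h h'
  obtain ⟨k, rfl, rfl⟩ := omegaRel_iff.1 h
  obtain ⟨k', hk, rfl⟩ := omegaRel_iff.1 h'
  rw [num_inj hk]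
  exact omega_num k'

/-! ### `sameComp` facts -/

lemma sameComp_omega_iff {M M'} :
    sameComp M M' omegaRel ↔ ∃ k, Eval M (num k) ∧ Eval M' (num k) := by
  constructor
  · rintro ⟨V, V', h1, h2, h3⟩
    obtain ⟨k, rfl, rfl⟩ := omegaRel_iff.1 h3
    exact ⟨k, h1, h2⟩
  · rintro ⟨k, h1, h2⟩
    exact ⟨num k, num k, h1, h2, omega_num k⟩

lemma sameComp_symm {α : Rel} (hα : Symmetric α) {M M'}
    (h : sameComp M M' α) : sameComp M' M α := by
  obtain ⟨V, V', h1, h2, h3⟩ := h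
  exact ⟨V', V, h2, h1, hα h3⟩

lemma sameComp_trans {α : Rel} (hα : Transitive α) {M M' M''}
    (h : sameComp M M' α) (h' : sameComp M' M'' α) : sameComp M M'' α := by
  obtain ⟨V, V', h1, h2, h3⟩ := h
  obtain ⟨W, W', h1', h2', h3'⟩ := h'
  have := eval_det h2 h1'
  subst this
  exact ⟨V, W', h1, h2', hα h3 h3'⟩

lemma sameComp_congr {α : Rel} (hs : Symmetric α) (ht : Transitive α) {M M' N N'}
    (hM : sameComp M M' α) (hN : sameComp N N' α) :
    sameComp M N α ↔ sameComp M' N' α := by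
  constructor
  · intro h
    exact sameComp_trans ht (sameComp_trans ht (sameComp_symm hs hM) h) hN
  · intro h
    exact sameComp_trans ht (sameComp_trans ht hM h) (sameComp_symm hs hN)

/-! ### Monotonicity of `TypesOp` -/

lemma sameType_mono {τ τ' : PTS} (h : τ ⊆ τ') {A A' α} :
    sameType A A' α τ → sameType A A' α τ' := by
  rintro ⟨A0, A0', h1, h2, h3⟩
  exact ⟨A0, A0', h1, h2, h h3⟩

lemma sameTypeFam_mono {τ τ' : PTS} (h : τ ⊆ τ') {α B B' β} :
    sameTypeFam α B B' β τ → sameTypeFam α B B' β τ' := by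
  intro hf V V' hVV'
  exact sameType_mono h (hf V V' hVV')

lemma typesOp_mono (v : PTS) : Monotone (TypesOp v) := by
  intro τ τ' h x hx
  rcases hx with ((((((((hx | hx) | hx) | hx) | hx) | hx) | hx) | hx) | hx)
  · exact Or.inl (Or.inl (Or.inl (Or.inl (Or.inl (Or.inl (Or.inl (Or.inl hx)))))))
  · obtain ⟨A, A', B, B', α, β, h1, h2, h3, h4, h5⟩ := hx
    exact Or.inl (Or.inl (Or.inl (Or.inl (Or.inl (Or.inl (Or.inl (Or.inr
      ⟨A, A', B, B', α, β, h1, h2, sameType_mono h h3, sameTypeFam_mono h h4, h5⟩)))))))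
  · obtain ⟨A, A', B, B', P, P', α, β, h1, h2, h3, h4, h5, h6⟩ := hx
    exact Or.inl (Or.inl (Or.inl (Or.inl (Or.inl (Or.inl (Or.inr
      ⟨A, A', B, B', P, P', α, β, h1, h2, sameType_mono h h3, sameTypeFam_mono h h4, h5, h6⟩))))))
  · obtain ⟨A, A', B, B', α, β, h1, h2, h3, h4, h5⟩ := hx
    exact Or.inl (Or.inl (Or.inl (Or.inl (Or.inl (Or.inr
      ⟨A, A', B, B', α, β, h1, h2, sameType_mono h h3, sameTypeFam_mono h h4, h5⟩)))))
  · obtain ⟨A, A', M, M', N, N', α, h1, h2, h3, h4, h5, h6⟩ := hx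
    exact Or.inl (Or.inl (Or.inl (Or.inl (Or.inr
      ⟨A, A', M, M', N, N', α, h1, h2, sameType_mono h h3, h4, h5, h6⟩))))
  · obtain ⟨A, A', B, B', α, β, h1, h2, h3, h4, h5⟩ := hx
    exact Or.inl (Or.inl (Or.inl (Or.inr
      ⟨A, A', B, B', α, β, h1, h2, sameType_mono h h3, sameTypeFam_mono h h4, h5⟩)))
  · exact Or.inl (Or.inl (Or.inr hx))
  · exact Or.inl (Or.inr hx)
  · exact Or.inr hx


/-! ### φ-builders for the clauses -/

def mkPi (α : Rel) (β : Exp → Exp → Rel) : Rel :=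
  fun F F' => ∃ N N', F = lam N ∧ F' = lam N' ∧
    sameCompOpen α (subst N 1 (lam N)) (subst N' 1 (lam N')) β

def mkFt (α : Rel) (β : Exp → Exp → Rel) (P : Exp) : Rel :=
  fun F F' => ∃ N N', F = lam N ∧ F' = lam N' ∧
    sameCCompOpen α (subst N 1 (lam N)) (subst N' 1 (lam N')) β P

def mkSg (α : Rel) (β : Exp → Exp → Rel) : Rel :=
  fun p p' => ∃ U V U' V', p = pair U V ∧ p' = pair U' V' ∧ α U U' ∧ β U U' V V'

def mkEq (M N : Exp) (α : Rel) : Rel :=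
  fun t t' => t = triv ∧ t' = triv ∧ sameComp M N α

def mkSub (α : Rel) (β : Exp → Exp → Rel) : Rel :=
  fun V V' => α V V' ∧ ∃ U U', β V V' U U'

def mkR2 (r : ℕ → ℕ → Prop) (M N : Exp) : Rel :=
  fun t t' => t = triv ∧ t' = triv ∧
    ∃ m n, r m n ∧ sameComp M (num m) omegaRel ∧ sameComp N (num n) omegaRel

def mkR3 (r : ℕ → ℕ → ℕ → Prop) (M N O : Exp) : Rel :=
  fun t t' => t = triv ∧ t' = triv ∧
    ∃ m n o, r m n o ∧ sameComp M (num m) omegaRel ∧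
      sameComp N (num n) omegaRel ∧ sameComp O (num o) omegaRel

/-! ### Case analysis on `TypesOp` membership -/

lemma typesOp_cases {v T : PTS} {x} (h : x ∈ TypesOp v T) :
    x ∈ NatCl ∨ x ∈ PiCl T ∨ x ∈ FuntimeCl T ∨ x ∈ SigmaCl T ∨ x ∈ EqCl T ∨
      x ∈ SubsetCl T ∨ x ∈ Rel2Cl ∨ x ∈ Rel3Cl ∨ x ∈ v := by
  rcases h with ((((((((h | h) | h) | h) | h) | h) | h) | h) | h) <;> tauto

lemma typesOp_of_nat {v T : PTS} {x} (h : x ∈ NatCl) : x ∈ TypesOp v T :=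
  Or.inl (Or.inl (Or.inl (Or.inl (Or.inl (Or.inl (Or.inl (Or.inl h)))))))
lemma typesOp_of_pi {v T : PTS} {x} (h : x ∈ PiCl T) : x ∈ TypesOp v T :=
  Or.inl (Or.inl (Or.inl (Or.inl (Or.inl (Or.inl (Or.inl (Or.inr h)))))))
lemma typesOp_of_ft {v T : PTS} {x} (h : x ∈ FuntimeCl T) : x ∈ TypesOp v T :=
  Or.inl (Or.inl (Or.inl (Or.inl (Or.inl (Or.inl (Or.inr h))))))
lemma typesOp_of_sg {v T : PTS} {x} (h : x ∈ SigmaCl T) : x ∈ TypesOp v T :=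
  Or.inl (Or.inl (Or.inl (Or.inl (Or.inl (Or.inr h)))))
lemma typesOp_of_eq {v T : PTS} {x} (h : x ∈ EqCl T) : x ∈ TypesOp v T :=
  Or.inl (Or.inl (Or.inl (Or.inl (Or.inr h))))
lemma typesOp_of_sub {v T : PTS} {x} (h : x ∈ SubsetCl T) : x ∈ TypesOp v T :=
  Or.inl (Or.inl (Or.inl (Or.inr h)))
lemma typesOp_of_r2 {v T : PTS} {x} (h : x ∈ Rel2Cl) : x ∈ TypesOp v T :=
  Or.inl (Or.inl (Or.inr h))
lemma typesOp_of_r3 {v T : PTS} {x} (h : x ∈ Rel3Cl) : x ∈ TypesOp v T :=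
  Or.inl (Or.inr h)
lemma typesOp_of_v {v T : PTS} {x} (h : x ∈ v) : x ∈ TypesOp v T := Or.inr h

/-- only-universes condition on `v` -/
def VOk (v : PTS) : Prop :=
  ∀ x ∈ v, ∃ i φ, x = (univ i, univ i, φ) ∧ Symmetric φ ∧ Transitive φ ∧
    (∀ ψ, ((univ i, univ i, ψ) : Exp × Exp × Rel) ∈ v → ψ = φ)

/-! ### Clause introduction lemmas -/

lemma piCl_intro {T : PTS} {A A' B B' α β} (h3 : sameType A A' α T)
    (h4 : sameTypeFam α B B' β T) :
    ((pi A B, pi A' B', mkPi α β) : Exp × Exp × Rel) ∈ PiCl T :=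
  ⟨A, A', B, B', α, β, rfl, rfl, h3, h4, rfl⟩

lemma ftCl_intro {T : PTS} {A A' B B' P P' α β} (h3 : sameType A A' α T)
    (h4 : sameTypeFam α B B' β T)
    (h5 : sameCompOpen α P P' (fun _ _ => omegaRel)) :
    ((funtime A B P, funtime A' B' P', mkFt α β P) : Exp × Exp × Rel) ∈ FuntimeCl T :=
  ⟨A, A', B, B', P, P', α, β, rfl, rfl, h3, h4, h5, rfl⟩

lemma sgCl_intro {T : PTS} {A A' B B' α β} (h3 : sameType A A' α T)
    (h4 : sameTypeFam α B B' β T) :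
    ((sigma A B, sigma A' B', mkSg α β) : Exp × Exp × Rel) ∈ SigmaCl T :=
  ⟨A, A', B, B', α, β, rfl, rfl, h3, h4, rfl⟩

lemma eqCl_intro {T : PTS} {A A' M M' N N' α} (h3 : sameType A A' α T)
    (h4 : sameComp M M' α) (h5 : sameComp N N' α) :
    ((eqty A M N, eqty A' M' N', mkEq M N α) : Exp × Exp × Rel) ∈ EqCl T :=
  ⟨A, A', M, M', N, N', α, rfl, rfl, h3, h4, h5, rfl⟩

lemma subCl_intro {T : PTS} {A A' B B' α β} (h3 : sameType A A' α T)
    (h4 : sameTypeFam α B B' β T) :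
    ((subset A B, subset A' B', mkSub α β) : Exp × Exp × Rel) ∈ SubsetCl T :=
  ⟨A, A', B, B', α, β, rfl, rfl, h3, h4, rfl⟩

lemma r2Cl_intro {r M M' N N'} (h3 : sameComp M M' omegaRel)
    (h4 : sameComp N N' omegaRel) :
    ((rel2 r M N, rel2 r M' N', mkR2 r M N) : Exp × Exp × Rel) ∈ Rel2Cl :=
  ⟨r, M, M', N, N', rfl, rfl, h3, h4, rfl⟩

lemma r3Cl_intro {r M M' N N' O O'} (h3 : sameComp M M' omegaRel)
    (h4 : sameComp N N' omegaRel) (h5 : sameComp O O' omegaRel) :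
    ((rel3 r M N O, rel3 r M' N' O', mkR3 r M N O) : Exp × Exp × Rel) ∈ Rel3Cl :=
  ⟨r, M, M', N, N', O, O', rfl, rfl, h3, h4, h5, rfl⟩

/-! ### Inversion lemmas -/

lemma inv_nat_l {v T : PTS} (hv : VOk v) {C ψ} (h : ((Exp.nat, C, ψ) : Exp × Exp × Rel) ∈ TypesOp v T) :
    C = Exp.nat ∧ ψ = omegaRel := by
  rcases typesOp_cases h with h|h|h|h|h|h|h|h|h
  case _ =>
    exact ⟨h.2.1, h.2.2⟩
  · (first
      | (obtain ⟨i, φ0, hx, -⟩ := hv _ h; simp [Prod.ext_iff] at hx)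
      | simp [NatCl, PiCl, FuntimeCl, SigmaCl, EqCl, SubsetCl, Rel2Cl, Rel3Cl,
          Set.mem_setOf_eq] at h)
  · (first
      | (obtain ⟨i, φ0, hx, -⟩ := hv _ h; simp [Prod.ext_iff] at hx)
      | simp [NatCl, PiCl, FuntimeCl, SigmaCl, EqCl, SubsetCl, Rel2Cl, Rel3Cl,
          Set.mem_setOf_eq] at h)
  · (first
      | (obtain ⟨i, φ0, hx, -⟩ := hv _ h; simp [Prod.ext_iff] at hx)
      | simp [NatCl, PiCl, FuntimeCl, SigmaCl, EqCl, SubsetCl, Rel2Cl, Rel3Cl,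
          Set.mem_setOf_eq] at h)
  · (first
      | (obtain ⟨i, φ0, hx, -⟩ := hv _ h; simp [Prod.ext_iff] at hx)
      | simp [NatCl, PiCl, FuntimeCl, SigmaCl, EqCl, SubsetCl, Rel2Cl, Rel3Cl,
          Set.mem_setOf_eq] at h)
  · (first
      | (obtain ⟨i, φ0, hx, -⟩ := hv _ h; simp [Prod.ext_iff] at hx)
      | simp [NatCl, PiCl, FuntimeCl, SigmaCl, EqCl, SubsetCl, Rel2Cl, Rel3Cl,
          Set.mem_setOf_eq] at h)
  · (first
      | (obtain ⟨i, φ0, hx, -⟩ := hv _ h; simp [Prod.ext_iff] at hx)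
      | simp [NatCl, PiCl, FuntimeCl, SigmaCl, EqCl, SubsetCl, Rel2Cl, Rel3Cl,
          Set.mem_setOf_eq] at h)
  · (first
      | (obtain ⟨i, φ0, hx, -⟩ := hv _ h; simp [Prod.ext_iff] at hx)
      | simp [NatCl, PiCl, FuntimeCl, SigmaCl, EqCl, SubsetCl, Rel2Cl, Rel3Cl,
          Set.mem_setOf_eq] at h)
  · (first
      | (obtain ⟨i, φ0, hx, -⟩ := hv _ h; simp [Prod.ext_iff] at hx)
      | simp [NatCl, PiCl, FuntimeCl, SigmaCl, EqCl, SubsetCl, Rel2Cl, Rel3Cl,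
          Set.mem_setOf_eq] at h)

lemma inv_nat_r {v T : PTS} (hv : VOk v) {C ψ} (h : ((C, Exp.nat, ψ) : Exp × Exp × Rel) ∈ TypesOp v T) :
    C = Exp.nat ∧ ψ = omegaRel := by
  rcases typesOp_cases h with h|h|h|h|h|h|h|h|h
  case _ =>
    exact ⟨h.1, h.2.2⟩
  · (first
      | (obtain ⟨i, φ0, hx, -⟩ := hv _ h; simp [Prod.ext_iff] at hx)
      | simp [NatCl, PiCl, FuntimeCl, SigmaCl, EqCl, SubsetCl, Rel2Cl, Rel3Cl,
          Set.mem_setOf_eq] at h)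
  · (first
      | (obtain ⟨i, φ0, hx, -⟩ := hv _ h; simp [Prod.ext_iff] at hx)
      | simp [NatCl, PiCl, FuntimeCl, SigmaCl, EqCl, SubsetCl, Rel2Cl, Rel3Cl,
          Set.mem_setOf_eq] at h)
  · (first
      | (obtain ⟨i, φ0, hx, -⟩ := hv _ h; simp [Prod.ext_iff] at hx)
      | simp [NatCl, PiCl, FuntimeCl, SigmaCl, EqCl, SubsetCl, Rel2Cl, Rel3Cl,
          Set.mem_setOf_eq] at h)
  · (first
      | (obtain ⟨i, φ0, hx, -⟩ := hv _ h; simp [Prod.ext_iff] at hx)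
      | simp [NatCl, PiCl, FuntimeCl, SigmaCl, EqCl, SubsetCl, Rel2Cl, Rel3Cl,
          Set.mem_setOf_eq] at h)
  · (first
      | (obtain ⟨i, φ0, hx, -⟩ := hv _ h; simp [Prod.ext_iff] at hx)
      | simp [NatCl, PiCl, FuntimeCl, SigmaCl, EqCl, SubsetCl, Rel2Cl, Rel3Cl,
          Set.mem_setOf_eq] at h)
  · (first
      | (obtain ⟨i, φ0, hx, -⟩ := hv _ h; simp [Prod.ext_iff] at hx)
      | simp [NatCl, PiCl, FuntimeCl, SigmaCl, EqCl, SubsetCl, Rel2Cl, Rel3Cl,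
          Set.mem_setOf_eq] at h)
  · (first
      | (obtain ⟨i, φ0, hx, -⟩ := hv _ h; simp [Prod.ext_iff] at hx)
      | simp [NatCl, PiCl, FuntimeCl, SigmaCl, EqCl, SubsetCl, Rel2Cl, Rel3Cl,
          Set.mem_setOf_eq] at h)
  · (first
      | (obtain ⟨i, φ0, hx, -⟩ := hv _ h; simp [Prod.ext_iff] at hx)
      | simp [NatCl, PiCl, FuntimeCl, SigmaCl, EqCl, SubsetCl, Rel2Cl, Rel3Cl,
          Set.mem_setOf_eq] at h)

lemma inv_pi_l {v T : PTS} (hv : VOk v) {A B C ψ} (h : ((pi A B, C, ψ) : Exp × Exp × Rel) ∈ TypesOp v T) :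
    ∃ A' B' α β, C = pi A' B' ∧ sameType A A' α T ∧ sameTypeFam α B B' β T ∧ ψ = mkPi α β := by
  rcases typesOp_cases h with h|h|h|h|h|h|h|h|h
  · (first
      | (obtain ⟨i, φ0, hx, -⟩ := hv _ h; simp [Prod.ext_iff] at hx)
      | simp [NatCl, PiCl, FuntimeCl, SigmaCl, EqCl, SubsetCl, Rel2Cl, Rel3Cl,
          Set.mem_setOf_eq] at h)
  case _ =>
    obtain ⟨A2, A2', B2, B2', α, β, h1, h2, h3, h4, h5⟩ := h
    injection h1 with e1 e2; subst e1; subst e2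
    exact ⟨A2', B2', α, β, h2, h3, h4, h5⟩
  · (first
      | (obtain ⟨i, φ0, hx, -⟩ := hv _ h; simp [Prod.ext_iff] at hx)
      | simp [NatCl, PiCl, FuntimeCl, SigmaCl, EqCl, SubsetCl, Rel2Cl, Rel3Cl,
          Set.mem_setOf_eq] at h)
  · (first
      | (obtain ⟨i, φ0, hx, -⟩ := hv _ h; simp [Prod.ext_iff] at hx)
      | simp [NatCl, PiCl, FuntimeCl, SigmaCl, EqCl, SubsetCl, Rel2Cl, Rel3Cl,
          Set.mem_setOf_eq] at h)
  · (first
      | (obtain ⟨i, φ0, hx, -⟩ := hv _ h; simp [Prod.ext_iff] at hx)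
      | simp [NatCl, PiCl, FuntimeCl, SigmaCl, EqCl, SubsetCl, Rel2Cl, Rel3Cl,
          Set.mem_setOf_eq] at h)
  · (first
      | (obtain ⟨i, φ0, hx, -⟩ := hv _ h; simp [Prod.ext_iff] at hx)
      | simp [NatCl, PiCl, FuntimeCl, SigmaCl, EqCl, SubsetCl, Rel2Cl, Rel3Cl,
          Set.mem_setOf_eq] at h)
  · (first
      | (obtain ⟨i, φ0, hx, -⟩ := hv _ h; simp [Prod.ext_iff] at hx)
      | simp [NatCl, PiCl, FuntimeCl, SigmaCl, EqCl, SubsetCl, Rel2Cl, Rel3Cl,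
          Set.mem_setOf_eq] at h)
  · (first
      | (obtain ⟨i, φ0, hx, -⟩ := hv _ h; simp [Prod.ext_iff] at hx)
      | simp [NatCl, PiCl, FuntimeCl, SigmaCl, EqCl, SubsetCl, Rel2Cl, Rel3Cl,
          Set.mem_setOf_eq] at h)
  · (first
      | (obtain ⟨i, φ0, hx, -⟩ := hv _ h; simp [Prod.ext_iff] at hx)
      | simp [NatCl, PiCl, FuntimeCl, SigmaCl, EqCl, SubsetCl, Rel2Cl, Rel3Cl,
          Set.mem_setOf_eq] at h)

lemma inv_pi_r {v T : PTS} (hv : VOk v) {A B C ψ} (h : ((C, pi A B, ψ) : Exp × Exp × Rel) ∈ TypesOp v T) :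
    ∃ A' B' α β, C = pi A' B' ∧ sameType A' A α T ∧ sameTypeFam α B' B β T ∧ ψ = mkPi α β := by
  rcases typesOp_cases h with h|h|h|h|h|h|h|h|h
  · (first
      | (obtain ⟨i, φ0, hx, -⟩ := hv _ h; simp [Prod.ext_iff] at hx)
      | simp [NatCl, PiCl, FuntimeCl, SigmaCl, EqCl, SubsetCl, Rel2Cl, Rel3Cl,
          Set.mem_setOf_eq] at h)
  case _ =>
    obtain ⟨A2, A2', B2, B2', α, β, h1, h2, h3, h4, h5⟩ := h
    injection h2 with e1 e2; subst e1; subst e2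
    exact ⟨A2, B2, α, β, h1, h3, h4, h5⟩
  · (first
      | (obtain ⟨i, φ0, hx, -⟩ := hv _ h; simp [Prod.ext_iff] at hx)
      | simp [NatCl, PiCl, FuntimeCl, SigmaCl, EqCl, SubsetCl, Rel2Cl, Rel3Cl,
          Set.mem_setOf_eq] at h)
  · (first
      | (obtain ⟨i, φ0, hx, -⟩ := hv _ h; simp [Prod.ext_iff] at hx)
      | simp [NatCl, PiCl, FuntimeCl, SigmaCl, EqCl, SubsetCl, Rel2Cl, Rel3Cl,
          Set.mem_setOf_eq] at h)
  · (first
      | (obtain ⟨i, φ0, hx, -⟩ := hv _ h; simp [Prod.ext_iff] at hx)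
      | simp [NatCl, PiCl, FuntimeCl, SigmaCl, EqCl, SubsetCl, Rel2Cl, Rel3Cl,
          Set.mem_setOf_eq] at h)
  · (first
      | (obtain ⟨i, φ0, hx, -⟩ := hv _ h; simp [Prod.ext_iff] at hx)
      | simp [NatCl, PiCl, FuntimeCl, SigmaCl, EqCl, SubsetCl, Rel2Cl, Rel3Cl,
          Set.mem_setOf_eq] at h)
  · (first
      | (obtain ⟨i, φ0, hx, -⟩ := hv _ h; simp [Prod.ext_iff] at hx)
      | simp [NatCl, PiCl, FuntimeCl, SigmaCl, EqCl, SubsetCl, Rel2Cl, Rel3Cl,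
          Set.mem_setOf_eq] at h)
  · (first
      | (obtain ⟨i, φ0, hx, -⟩ := hv _ h; simp [Prod.ext_iff] at hx)
      | simp [NatCl, PiCl, FuntimeCl, SigmaCl, EqCl, SubsetCl, Rel2Cl, Rel3Cl,
          Set.mem_setOf_eq] at h)
  · (first
      | (obtain ⟨i, φ0, hx, -⟩ := hv _ h; simp [Prod.ext_iff] at hx)
      | simp [NatCl, PiCl, FuntimeCl, SigmaCl, EqCl, SubsetCl, Rel2Cl, Rel3Cl,
          Set.mem_setOf_eq] at h)

lemma inv_ft_l {v T : PTS} (hv : VOk v) {A B P C ψ} (h : ((funtime A B P, C, ψ) : Exp × Exp × Rel) ∈ TypesOp v T) :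
    ∃ A' B' P' α β, C = funtime A' B' P' ∧ sameType A A' α T ∧ sameTypeFam α B B' β T ∧ sameCompOpen α P P' (fun _ _ => omegaRel) ∧ ψ = mkFt α β P := by
  rcases typesOp_cases h with h|h|h|h|h|h|h|h|h
  · (first
      | (obtain ⟨i, φ0, hx, -⟩ := hv _ h; simp [Prod.ext_iff] at hx)
      | simp [NatCl, PiCl, FuntimeCl, SigmaCl, EqCl, SubsetCl, Rel2Cl, Rel3Cl,
          Set.mem_setOf_eq] at h)
  · (first
      | (obtain ⟨i, φ0, hx, -⟩ := hv _ h; simp [Prod.ext_iff] at hx)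
      | simp [NatCl, PiCl, FuntimeCl, SigmaCl, EqCl, SubsetCl, Rel2Cl, Rel3Cl,
          Set.mem_setOf_eq] at h)
  case _ =>
    obtain ⟨A2, A2', B2, B2', P2, P2', α, β, h1, h2, h3, h4, h5, h6⟩ := h
    injection h1 with e1 e2 e3; subst e1; subst e2; subst e3
    exact ⟨A2', B2', P2', α, β, h2, h3, h4, h5, h6⟩
  · (first
      | (obtain ⟨i, φ0, hx, -⟩ := hv _ h; simp [Prod.ext_iff] at hx)
      | simp [NatCl, PiCl, FuntimeCl, SigmaCl, EqCl, SubsetCl, Rel2Cl, Rel3Cl,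
          Set.mem_setOf_eq] at h)
  · (first
      | (obtain ⟨i, φ0, hx, -⟩ := hv _ h; simp [Prod.ext_iff] at hx)
      | simp [NatCl, PiCl, FuntimeCl, SigmaCl, EqCl, SubsetCl, Rel2Cl, Rel3Cl,
          Set.mem_setOf_eq] at h)
  · (first
      | (obtain ⟨i, φ0, hx, -⟩ := hv _ h; simp [Prod.ext_iff] at hx)
      | simp [NatCl, PiCl, FuntimeCl, SigmaCl, EqCl, SubsetCl, Rel2Cl, Rel3Cl,
          Set.mem_setOf_eq] at h)
  · (first
      | (obtain ⟨i, φ0, hx, -⟩ := hv _ h; simp [Prod.ext_iff] at hx)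
      | simp [NatCl, PiCl, FuntimeCl, SigmaCl, EqCl, SubsetCl, Rel2Cl, Rel3Cl,
          Set.mem_setOf_eq] at h)
  · (first
      | (obtain ⟨i, φ0, hx, -⟩ := hv _ h; simp [Prod.ext_iff] at hx)
      | simp [NatCl, PiCl, FuntimeCl, SigmaCl, EqCl, SubsetCl, Rel2Cl, Rel3Cl,
          Set.mem_setOf_eq] at h)
  · (first
      | (obtain ⟨i, φ0, hx, -⟩ := hv _ h; simp [Prod.ext_iff] at hx)
      | simp [NatCl, PiCl, FuntimeCl, SigmaCl, EqCl, SubsetCl, Rel2Cl, Rel3Cl,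
          Set.mem_setOf_eq] at h)

lemma inv_ft_r {v T : PTS} (hv : VOk v) {A B P C ψ} (h : ((C, funtime A B P, ψ) : Exp × Exp × Rel) ∈ TypesOp v T) :
    ∃ A' B' P' α β, C = funtime A' B' P' ∧ sameType A' A α T ∧ sameTypeFam α B' B β T ∧ sameCompOpen α P' P (fun _ _ => omegaRel) ∧ ψ = mkFt α β P' := by
  rcases typesOp_cases h with h|h|h|h|h|h|h|h|h
  · (first
      | (obtain ⟨i, φ0, hx, -⟩ := hv _ h; simp [Prod.ext_iff] at hx)
      | simp [NatCl, PiCl, FuntimeCl, SigmaCl, EqCl, SubsetCl, Rel2Cl, Rel3Cl,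
          Set.mem_setOf_eq] at h)
  · (first
      | (obtain ⟨i, φ0, hx, -⟩ := hv _ h; simp [Prod.ext_iff] at hx)
      | simp [NatCl, PiCl, FuntimeCl, SigmaCl, EqCl, SubsetCl, Rel2Cl, Rel3Cl,
          Set.mem_setOf_eq] at h)
  case _ =>
    obtain ⟨A2, A2', B2, B2', P2, P2', α, β, h1, h2, h3, h4, h5, h6⟩ := h
    injection h2 with e1 e2 e3; subst e1; subst e2; subst e3
    exact ⟨A2, B2, P2, α, β, h1, h3, h4, h5, h6⟩
  · (first
      | (obtain ⟨i, φ0, hx, -⟩ := hv _ h; simp [Prod.ext_iff] at hx)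
      | simp [NatCl, PiCl, FuntimeCl, SigmaCl, EqCl, SubsetCl, Rel2Cl, Rel3Cl,
          Set.mem_setOf_eq] at h)
  · (first
      | (obtain ⟨i, φ0, hx, -⟩ := hv _ h; simp [Prod.ext_iff] at hx)
      | simp [NatCl, PiCl, FuntimeCl, SigmaCl, EqCl, SubsetCl, Rel2Cl, Rel3Cl,
          Set.mem_setOf_eq] at h)
  · (first
      | (obtain ⟨i, φ0, hx, -⟩ := hv _ h; simp [Prod.ext_iff] at hx)
      | simp [NatCl, PiCl, FuntimeCl, SigmaCl, EqCl, SubsetCl, Rel2Cl, Rel3Cl,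
          Set.mem_setOf_eq] at h)
  · (first
      | (obtain ⟨i, φ0, hx, -⟩ := hv _ h; simp [Prod.ext_iff] at hx)
      | simp [NatCl, PiCl, FuntimeCl, SigmaCl, EqCl, SubsetCl, Rel2Cl, Rel3Cl,
          Set.mem_setOf_eq] at h)
  · (first
      | (obtain ⟨i, φ0, hx, -⟩ := hv _ h; simp [Prod.ext_iff] at hx)
      | simp [NatCl, PiCl, FuntimeCl, SigmaCl, EqCl, SubsetCl, Rel2Cl, Rel3Cl,
          Set.mem_setOf_eq] at h)
  · (first
      | (obtain ⟨i, φ0, hx, -⟩ := hv _ h; simp [Prod.ext_iff] at hx)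
      | simp [NatCl, PiCl, FuntimeCl, SigmaCl, EqCl, SubsetCl, Rel2Cl, Rel3Cl,
          Set.mem_setOf_eq] at h)

lemma inv_sg_l {v T : PTS} (hv : VOk v) {A B C ψ} (h : ((sigma A B, C, ψ) : Exp × Exp × Rel) ∈ TypesOp v T) :
    ∃ A' B' α β, C = sigma A' B' ∧ sameType A A' α T ∧ sameTypeFam α B B' β T ∧ ψ = mkSg α β := by
  rcases typesOp_cases h with h|h|h|h|h|h|h|h|h
  · (first
      | (obtain ⟨i, φ0, hx, -⟩ := hv _ h; simp [Prod.ext_iff] at hx)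
      | simp [NatCl, PiCl, FuntimeCl, SigmaCl, EqCl, SubsetCl, Rel2Cl, Rel3Cl,
          Set.mem_setOf_eq] at h)
  · (first
      | (obtain ⟨i, φ0, hx, -⟩ := hv _ h; simp [Prod.ext_iff] at hx)
      | simp [NatCl, PiCl, FuntimeCl, SigmaCl, EqCl, SubsetCl, Rel2Cl, Rel3Cl,
          Set.mem_setOf_eq] at h)
  · (first
      | (obtain ⟨i, φ0, hx, -⟩ := hv _ h; simp [Prod.ext_iff] at hx)
      | simp [NatCl, PiCl, FuntimeCl, SigmaCl, EqCl, SubsetCl, Rel2Cl, Rel3Cl,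
          Set.mem_setOf_eq] at h)
  case _ =>
    obtain ⟨A2, A2', B2, B2', α, β, h1, h2, h3, h4, h5⟩ := h
    injection h1 with e1 e2; subst e1; subst e2
    exact ⟨A2', B2', α, β, h2, h3, h4, h5⟩
  · (first
      | (obtain ⟨i, φ0, hx, -⟩ := hv _ h; simp [Prod.ext_iff] at hx)
      | simp [NatCl, PiCl, FuntimeCl, SigmaCl, EqCl, SubsetCl, Rel2Cl, Rel3Cl,
          Set.mem_setOf_eq] at h)
  · (first
      | (obtain ⟨i, φ0, hx, -⟩ := hv _ h; simp [Prod.ext_iff] at hx)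
      | simp [NatCl, PiCl, FuntimeCl, SigmaCl, EqCl, SubsetCl, Rel2Cl, Rel3Cl,
          Set.mem_setOf_eq] at h)
  · (first
      | (obtain ⟨i, φ0, hx, -⟩ := hv _ h; simp [Prod.ext_iff] at hx)
      | simp [NatCl, PiCl, FuntimeCl, SigmaCl, EqCl, SubsetCl, Rel2Cl, Rel3Cl,
          Set.mem_setOf_eq] at h)
  · (first
      | (obtain ⟨i, φ0, hx, -⟩ := hv _ h; simp [Prod.ext_iff] at hx)
      | simp [NatCl, PiCl, FuntimeCl, SigmaCl, EqCl, SubsetCl, Rel2Cl, Rel3Cl,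
          Set.mem_setOf_eq] at h)
  · (first
      | (obtain ⟨i, φ0, hx, -⟩ := hv _ h; simp [Prod.ext_iff] at hx)
      | simp [NatCl, PiCl, FuntimeCl, SigmaCl, EqCl, SubsetCl, Rel2Cl, Rel3Cl,
          Set.mem_setOf_eq] at h)

lemma inv_sg_r {v T : PTS} (hv : VOk v) {A B C ψ} (h : ((C, sigma A B, ψ) : Exp × Exp × Rel) ∈ TypesOp v T) :
    ∃ A' B' α β, C = sigma A' B' ∧ sameType A' A α T ∧ sameTypeFam α B' B β T ∧ ψ = mkSg α β := by
  rcases typesOp_cases h with h|h|h|h|h|h|h|h|h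
  · (first
      | (obtain ⟨i, φ0, hx, -⟩ := hv _ h; simp [Prod.ext_iff] at hx)
      | simp [NatCl, PiCl, FuntimeCl, SigmaCl, EqCl, SubsetCl, Rel2Cl, Rel3Cl,
          Set.mem_setOf_eq] at h)
  · (first
      | (obtain ⟨i, φ0, hx, -⟩ := hv _ h; simp [Prod.ext_iff] at hx)
      | simp [NatCl, PiCl, FuntimeCl, SigmaCl, EqCl, SubsetCl, Rel2Cl, Rel3Cl,
          Set.mem_setOf_eq] at h)
  · (first
      | (obtain ⟨i, φ0, hx, -⟩ := hv _ h; simp [Prod.ext_iff] at hx)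
      | simp [NatCl, PiCl, FuntimeCl, SigmaCl, EqCl, SubsetCl, Rel2Cl, Rel3Cl,
          Set.mem_setOf_eq] at h)
  case _ =>
    obtain ⟨A2, A2', B2, B2', α, β, h1, h2, h3, h4, h5⟩ := h
    injection h2 with e1 e2; subst e1; subst e2
    exact ⟨A2, B2, α, β, h1, h3, h4, h5⟩
  · (first
      | (obtain ⟨i, φ0, hx, -⟩ := hv _ h; simp [Prod.ext_iff] at hx)
      | simp [NatCl, PiCl, FuntimeCl, SigmaCl, EqCl, SubsetCl, Rel2Cl, Rel3Cl,
          Set.mem_setOf_eq] at h)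
  · (first
      | (obtain ⟨i, φ0, hx, -⟩ := hv _ h; simp [Prod.ext_iff] at hx)
      | simp [NatCl, PiCl, FuntimeCl, SigmaCl, EqCl, SubsetCl, Rel2Cl, Rel3Cl,
          Set.mem_setOf_eq] at h)
  · (first
      | (obtain ⟨i, φ0, hx, -⟩ := hv _ h; simp [Prod.ext_iff] at hx)
      | simp [NatCl, PiCl, FuntimeCl, SigmaCl, EqCl, SubsetCl, Rel2Cl, Rel3Cl,
          Set.mem_setOf_eq] at h)
  · (first
      | (obtain ⟨i, φ0, hx, -⟩ := hv _ h; simp [Prod.ext_iff] at hx)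
      | simp [NatCl, PiCl, FuntimeCl, SigmaCl, EqCl, SubsetCl, Rel2Cl, Rel3Cl,
          Set.mem_setOf_eq] at h)
  · (first
      | (obtain ⟨i, φ0, hx, -⟩ := hv _ h; simp [Prod.ext_iff] at hx)
      | simp [NatCl, PiCl, FuntimeCl, SigmaCl, EqCl, SubsetCl, Rel2Cl, Rel3Cl,
          Set.mem_setOf_eq] at h)

lemma inv_eq_l {v T : PTS} (hv : VOk v) {A M N C ψ} (h : ((eqty A M N, C, ψ) : Exp × Exp × Rel) ∈ TypesOp v T) :
    ∃ A' M' N' α, C = eqty A' M' N' ∧ sameType A A' α T ∧ sameComp M M' α ∧ sameComp N N' α ∧ ψ = mkEq M N α := by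
  rcases typesOp_cases h with h|h|h|h|h|h|h|h|h
  · (first
      | (obtain ⟨i, φ0, hx, -⟩ := hv _ h; simp [Prod.ext_iff] at hx)
      | simp [NatCl, PiCl, FuntimeCl, SigmaCl, EqCl, SubsetCl, Rel2Cl, Rel3Cl,
          Set.mem_setOf_eq] at h)
  · (first
      | (obtain ⟨i, φ0, hx, -⟩ := hv _ h; simp [Prod.ext_iff] at hx)
      | simp [NatCl, PiCl, FuntimeCl, SigmaCl, EqCl, SubsetCl, Rel2Cl, Rel3Cl,
          Set.mem_setOf_eq] at h)
  · (first
      | (obtain ⟨i, φ0, hx, -⟩ := hv _ h; simp [Prod.ext_iff] at hx)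
      | simp [NatCl, PiCl, FuntimeCl, SigmaCl, EqCl, SubsetCl, Rel2Cl, Rel3Cl,
          Set.mem_setOf_eq] at h)
  · (first
      | (obtain ⟨i, φ0, hx, -⟩ := hv _ h; simp [Prod.ext_iff] at hx)
      | simp [NatCl, PiCl, FuntimeCl, SigmaCl, EqCl, SubsetCl, Rel2Cl, Rel3Cl,
          Set.mem_setOf_eq] at h)
  case _ =>
    obtain ⟨A2, A2', M2, M2', N2, N2', α, h1, h2, h3, h4, h5, h6⟩ := h
    injection h1 with e1 e2 e3; subst e1; subst e2; subst e3
    exact ⟨A2', M2', N2', α, h2, h3, h4, h5, h6⟩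
  · (first
      | (obtain ⟨i, φ0, hx, -⟩ := hv _ h; simp [Prod.ext_iff] at hx)
      | simp [NatCl, PiCl, FuntimeCl, SigmaCl, EqCl, SubsetCl, Rel2Cl, Rel3Cl,
          Set.mem_setOf_eq] at h)
  · (first
      | (obtain ⟨i, φ0, hx, -⟩ := hv _ h; simp [Prod.ext_iff] at hx)
      | simp [NatCl, PiCl, FuntimeCl, SigmaCl, EqCl, SubsetCl, Rel2Cl, Rel3Cl,
          Set.mem_setOf_eq] at h)
  · (first
      | (obtain ⟨i, φ0, hx, -⟩ := hv _ h; simp [Prod.ext_iff] at hx)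
      | simp [NatCl, PiCl, FuntimeCl, SigmaCl, EqCl, SubsetCl, Rel2Cl, Rel3Cl,
          Set.mem_setOf_eq] at h)
  · (first
      | (obtain ⟨i, φ0, hx, -⟩ := hv _ h; simp [Prod.ext_iff] at hx)
      | simp [NatCl, PiCl, FuntimeCl, SigmaCl, EqCl, SubsetCl, Rel2Cl, Rel3Cl,
          Set.mem_setOf_eq] at h)

lemma inv_eq_r {v T : PTS} (hv : VOk v) {A M N C ψ} (h : ((C, eqty A M N, ψ) : Exp × Exp × Rel) ∈ TypesOp v T) :
    ∃ A' M' N' α, C = eqty A' M' N' ∧ sameType A' A α T ∧ sameComp M' M α ∧ sameComp N' N α ∧ ψ = mkEq M' N' α := by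
  rcases typesOp_cases h with h|h|h|h|h|h|h|h|h
  · (first
      | (obtain ⟨i, φ0, hx, -⟩ := hv _ h; simp [Prod.ext_iff] at hx)
      | simp [NatCl, PiCl, FuntimeCl, SigmaCl, EqCl, SubsetCl, Rel2Cl, Rel3Cl,
          Set.mem_setOf_eq] at h)
  · (first
      | (obtain ⟨i, φ0, hx, -⟩ := hv _ h; simp [Prod.ext_iff] at hx)
      | simp [NatCl, PiCl, FuntimeCl, SigmaCl, EqCl, SubsetCl, Rel2Cl, Rel3Cl,
          Set.mem_setOf_eq] at h)
  · (first
      | (obtain ⟨i, φ0, hx, -⟩ := hv _ h; simp [Prod.ext_iff] at hx)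
      | simp [NatCl, PiCl, FuntimeCl, SigmaCl, EqCl, SubsetCl, Rel2Cl, Rel3Cl,
          Set.mem_setOf_eq] at h)
  · (first
      | (obtain ⟨i, φ0, hx, -⟩ := hv _ h; simp [Prod.ext_iff] at hx)
      | simp [NatCl, PiCl, FuntimeCl, SigmaCl, EqCl, SubsetCl, Rel2Cl, Rel3Cl,
          Set.mem_setOf_eq] at h)
  case _ =>
    obtain ⟨A2, A2', M2, M2', N2, N2', α, h1, h2, h3, h4, h5, h6⟩ := h
    injection h2 with e1 e2 e3; subst e1; subst e2; subst e3
    exact ⟨A2, M2, N2, α, h1, h3, h4, h5, h6⟩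
  · (first
      | (obtain ⟨i, φ0, hx, -⟩ := hv _ h; simp [Prod.ext_iff] at hx)
      | simp [NatCl, PiCl, FuntimeCl, SigmaCl, EqCl, SubsetCl, Rel2Cl, Rel3Cl,
          Set.mem_setOf_eq] at h)
  · (first
      | (obtain ⟨i, φ0, hx, -⟩ := hv _ h; simp [Prod.ext_iff] at hx)
      | simp [NatCl, PiCl, FuntimeCl, SigmaCl, EqCl, SubsetCl, Rel2Cl, Rel3Cl,
          Set.mem_setOf_eq] at h)
  · (first
      | (obtain ⟨i, φ0, hx, -⟩ := hv _ h; simp [Prod.ext_iff] at hx)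
      | simp [NatCl, PiCl, FuntimeCl, SigmaCl, EqCl, SubsetCl, Rel2Cl, Rel3Cl,
          Set.mem_setOf_eq] at h)
  · (first
      | (obtain ⟨i, φ0, hx, -⟩ := hv _ h; simp [Prod.ext_iff] at hx)
      | simp [NatCl, PiCl, FuntimeCl, SigmaCl, EqCl, SubsetCl, Rel2Cl, Rel3Cl,
          Set.mem_setOf_eq] at h)

lemma inv_sub_l {v T : PTS} (hv : VOk v) {A B C ψ} (h : ((subset A B, C, ψ) : Exp × Exp × Rel) ∈ TypesOp v T) :
    ∃ A' B' α β, C = subset A' B' ∧ sameType A A' α T ∧ sameTypeFam α B B' β T ∧ ψ = mkSub α β := by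
  rcases typesOp_cases h with h|h|h|h|h|h|h|h|h
  · (first
      | (obtain ⟨i, φ0, hx, -⟩ := hv _ h; simp [Prod.ext_iff] at hx)
      | simp [NatCl, PiCl, FuntimeCl, SigmaCl, EqCl, SubsetCl, Rel2Cl, Rel3Cl,
          Set.mem_setOf_eq] at h)
  · (first
      | (obtain ⟨i, φ0, hx, -⟩ := hv _ h; simp [Prod.ext_iff] at hx)
      | simp [NatCl, PiCl, FuntimeCl, SigmaCl, EqCl, SubsetCl, Rel2Cl, Rel3Cl,
          Set.mem_setOf_eq] at h)
  · (first
      | (obtain ⟨i, φ0, hx, -⟩ := hv _ h; simp [Prod.ext_iff] at hx)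
      | simp [NatCl, PiCl, FuntimeCl, SigmaCl, EqCl, SubsetCl, Rel2Cl, Rel3Cl,
          Set.mem_setOf_eq] at h)
  · (first
      | (obtain ⟨i, φ0, hx, -⟩ := hv _ h; simp [Prod.ext_iff] at hx)
      | simp [NatCl, PiCl, FuntimeCl, SigmaCl, EqCl, SubsetCl, Rel2Cl, Rel3Cl,
          Set.mem_setOf_eq] at h)
  · (first
      | (obtain ⟨i, φ0, hx, -⟩ := hv _ h; simp [Prod.ext_iff] at hx)
      | simp [NatCl, PiCl, FuntimeCl, SigmaCl, EqCl, SubsetCl, Rel2Cl, Rel3Cl,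
          Set.mem_setOf_eq] at h)
  case _ =>
    obtain ⟨A2, A2', B2, B2', α, β, h1, h2, h3, h4, h5⟩ := h
    injection h1 with e1 e2; subst e1; subst e2
    exact ⟨A2', B2', α, β, h2, h3, h4, h5⟩
  · (first
      | (obtain ⟨i, φ0, hx, -⟩ := hv _ h; simp [Prod.ext_iff] at hx)
      | simp [NatCl, PiCl, FuntimeCl, SigmaCl, EqCl, SubsetCl, Rel2Cl, Rel3Cl,
          Set.mem_setOf_eq] at h)
  · (first
      | (obtain ⟨i, φ0, hx, -⟩ := hv _ h; simp [Prod.ext_iff] at hx)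
      | simp [NatCl, PiCl, FuntimeCl, SigmaCl, EqCl, SubsetCl, Rel2Cl, Rel3Cl,
          Set.mem_setOf_eq] at h)
  · (first
      | (obtain ⟨i, φ0, hx, -⟩ := hv _ h; simp [Prod.ext_iff] at hx)
      | simp [NatCl, PiCl, FuntimeCl, SigmaCl, EqCl, SubsetCl, Rel2Cl, Rel3Cl,
          Set.mem_setOf_eq] at h)

lemma inv_sub_r {v T : PTS} (hv : VOk v) {A B C ψ} (h : ((C, subset A B, ψ) : Exp × Exp × Rel) ∈ TypesOp v T) :
    ∃ A' B' α β, C = subset A' B' ∧ sameType A' A α T ∧ sameTypeFam α B' B β T ∧ ψ = mkSub α β := by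
  rcases typesOp_cases h with h|h|h|h|h|h|h|h|h
  · (first
      | (obtain ⟨i, φ0, hx, -⟩ := hv _ h; simp [Prod.ext_iff] at hx)
      | simp [NatCl, PiCl, FuntimeCl, SigmaCl, EqCl, SubsetCl, Rel2Cl, Rel3Cl,
          Set.mem_setOf_eq] at h)
  · (first
      | (obtain ⟨i, φ0, hx, -⟩ := hv _ h; simp [Prod.ext_iff] at hx)
      | simp [NatCl, PiCl, FuntimeCl, SigmaCl, EqCl, SubsetCl, Rel2Cl, Rel3Cl,
          Set.mem_setOf_eq] at h)
  · (first
      | (obtain ⟨i, φ0, hx, -⟩ := hv _ h; simp [Prod.ext_iff] at hx)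
      | simp [NatCl, PiCl, FuntimeCl, SigmaCl, EqCl, SubsetCl, Rel2Cl, Rel3Cl,
          Set.mem_setOf_eq] at h)
  · (first
      | (obtain ⟨i, φ0, hx, -⟩ := hv _ h; simp [Prod.ext_iff] at hx)
      | simp [NatCl, PiCl, FuntimeCl, SigmaCl, EqCl, SubsetCl, Rel2Cl, Rel3Cl,
          Set.mem_setOf_eq] at h)
  · (first
      | (obtain ⟨i, φ0, hx, -⟩ := hv _ h; simp [Prod.ext_iff] at hx)
      | simp [NatCl, PiCl, FuntimeCl, SigmaCl, EqCl, SubsetCl, Rel2Cl, Rel3Cl,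
          Set.mem_setOf_eq] at h)
  case _ =>
    obtain ⟨A2, A2', B2, B2', α, β, h1, h2, h3, h4, h5⟩ := h
    injection h2 with e1 e2; subst e1; subst e2
    exact ⟨A2, B2, α, β, h1, h3, h4, h5⟩
  · (first
      | (obtain ⟨i, φ0, hx, -⟩ := hv _ h; simp [Prod.ext_iff] at hx)
      | simp [NatCl, PiCl, FuntimeCl, SigmaCl, EqCl, SubsetCl, Rel2Cl, Rel3Cl,
          Set.mem_setOf_eq] at h)
  · (first
      | (obtain ⟨i, φ0, hx, -⟩ := hv _ h; simp [Prod.ext_iff] at hx)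
      | simp [NatCl, PiCl, FuntimeCl, SigmaCl, EqCl, SubsetCl, Rel2Cl, Rel3Cl,
          Set.mem_setOf_eq] at h)
  · (first
      | (obtain ⟨i, φ0, hx, -⟩ := hv _ h; simp [Prod.ext_iff] at hx)
      | simp [NatCl, PiCl, FuntimeCl, SigmaCl, EqCl, SubsetCl, Rel2Cl, Rel3Cl,
          Set.mem_setOf_eq] at h)

lemma inv_r2_l {v T : PTS} (hv : VOk v) {r M N C ψ} (h : ((rel2 r M N, C, ψ) : Exp × Exp × Rel) ∈ TypesOp v T) :
    ∃ M' N', C = rel2 r M' N' ∧ sameComp M M' omegaRel ∧ sameComp N N' omegaRel ∧ ψ = mkR2 r M N := by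
  rcases typesOp_cases h with h|h|h|h|h|h|h|h|h
  · (first
      | (obtain ⟨i, φ0, hx, -⟩ := hv _ h; simp [Prod.ext_iff] at hx)
      | simp [NatCl, PiCl, FuntimeCl, SigmaCl, EqCl, SubsetCl, Rel2Cl, Rel3Cl,
          Set.mem_setOf_eq] at h)
  · (first
      | (obtain ⟨i, φ0, hx, -⟩ := hv _ h; simp [Prod.ext_iff] at hx)
      | simp [NatCl, PiCl, FuntimeCl, SigmaCl, EqCl, SubsetCl, Rel2Cl, Rel3Cl,
          Set.mem_setOf_eq] at h)
  · (first
      | (obtain ⟨i, φ0, hx, -⟩ := hv _ h; simp [Prod.ext_iff] at hx)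
      | simp [NatCl, PiCl, FuntimeCl, SigmaCl, EqCl, SubsetCl, Rel2Cl, Rel3Cl,
          Set.mem_setOf_eq] at h)
  · (first
      | (obtain ⟨i, φ0, hx, -⟩ := hv _ h; simp [Prod.ext_iff] at hx)
      | simp [NatCl, PiCl, FuntimeCl, SigmaCl, EqCl, SubsetCl, Rel2Cl, Rel3Cl,
          Set.mem_setOf_eq] at h)
  · (first
      | (obtain ⟨i, φ0, hx, -⟩ := hv _ h; simp [Prod.ext_iff] at hx)
      | simp [NatCl, PiCl, FuntimeCl, SigmaCl, EqCl, SubsetCl, Rel2Cl, Rel3Cl,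
          Set.mem_setOf_eq] at h)
  · (first
      | (obtain ⟨i, φ0, hx, -⟩ := hv _ h; simp [Prod.ext_iff] at hx)
      | simp [NatCl, PiCl, FuntimeCl, SigmaCl, EqCl, SubsetCl, Rel2Cl, Rel3Cl,
          Set.mem_setOf_eq] at h)
  case _ =>
    obtain ⟨r2, M2, M2', N2, N2', h1, h2, h3, h4, h5⟩ := h
    injection h1 with e0 e1 e2; subst e0; subst e1; subst e2
    exact ⟨M2', N2', h2, h3, h4, h5⟩
  · (first
      | (obtain ⟨i, φ0, hx, -⟩ := hv _ h; simp [Prod.ext_iff] at hx)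
      | simp [NatCl, PiCl, FuntimeCl, SigmaCl, EqCl, SubsetCl, Rel2Cl, Rel3Cl,
          Set.mem_setOf_eq] at h)
  · (first
      | (obtain ⟨i, φ0, hx, -⟩ := hv _ h; simp [Prod.ext_iff] at hx)
      | simp [NatCl, PiCl, FuntimeCl, SigmaCl, EqCl, SubsetCl, Rel2Cl, Rel3Cl,
          Set.mem_setOf_eq] at h)

lemma inv_r2_r {v T : PTS} (hv : VOk v) {r M N C ψ} (h : ((C, rel2 r M N, ψ) : Exp × Exp × Rel) ∈ TypesOp v T) :
    ∃ M' N', C = rel2 r M' N' ∧ sameComp M' M omegaRel ∧ sameComp N' N omegaRel ∧ ψ = mkR2 r M' N' := by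
  rcases typesOp_cases h with h|h|h|h|h|h|h|h|h
  · (first
      | (obtain ⟨i, φ0, hx, -⟩ := hv _ h; simp [Prod.ext_iff] at hx)
      | simp [NatCl, PiCl, FuntimeCl, SigmaCl, EqCl, SubsetCl, Rel2Cl, Rel3Cl,
          Set.mem_setOf_eq] at h)
  · (first
      | (obtain ⟨i, φ0, hx, -⟩ := hv _ h; simp [Prod.ext_iff] at hx)
      | simp [NatCl, PiCl, FuntimeCl, SigmaCl, EqCl, SubsetCl, Rel2Cl, Rel3Cl,
          Set.mem_setOf_eq] at h)
  · (first
      | (obtain ⟨i, φ0, hx, -⟩ := hv _ h; simp [Prod.ext_iff] at hx)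
      | simp [NatCl, PiCl, FuntimeCl, SigmaCl, EqCl, SubsetCl, Rel2Cl, Rel3Cl,
          Set.mem_setOf_eq] at h)
  · (first
      | (obtain ⟨i, φ0, hx, -⟩ := hv _ h; simp [Prod.ext_iff] at hx)
      | simp [NatCl, PiCl, FuntimeCl, SigmaCl, EqCl, SubsetCl, Rel2Cl, Rel3Cl,
          Set.mem_setOf_eq] at h)
  · (first
      | (obtain ⟨i, φ0, hx, -⟩ := hv _ h; simp [Prod.ext_iff] at hx)
      | simp [NatCl, PiCl, FuntimeCl, SigmaCl, EqCl, SubsetCl, Rel2Cl, Rel3Cl,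
          Set.mem_setOf_eq] at h)
  · (first
      | (obtain ⟨i, φ0, hx, -⟩ := hv _ h; simp [Prod.ext_iff] at hx)
      | simp [NatCl, PiCl, FuntimeCl, SigmaCl, EqCl, SubsetCl, Rel2Cl, Rel3Cl,
          Set.mem_setOf_eq] at h)
  case _ =>
    obtain ⟨r2, M2, M2', N2, N2', h1, h2, h3, h4, h5⟩ := h
    injection h2 with e0 e1 e2; subst e0; subst e1; subst e2
    exact ⟨M2, N2, h1, h3, h4, h5⟩
  · (first
      | (obtain ⟨i, φ0, hx, -⟩ := hv _ h; simp [Prod.ext_iff] at hx)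
      | simp [NatCl, PiCl, FuntimeCl, SigmaCl, EqCl, SubsetCl, Rel2Cl, Rel3Cl,
          Set.mem_setOf_eq] at h)
  · (first
      | (obtain ⟨i, φ0, hx, -⟩ := hv _ h; simp [Prod.ext_iff] at hx)
      | simp [NatCl, PiCl, FuntimeCl, SigmaCl, EqCl, SubsetCl, Rel2Cl, Rel3Cl,
          Set.mem_setOf_eq] at h)

lemma inv_r3_l {v T : PTS} (hv : VOk v) {r M N O C ψ} (h : ((rel3 r M N O, C, ψ) : Exp × Exp × Rel) ∈ TypesOp v T) :
    ∃ M' N' O', C = rel3 r M' N' O' ∧ sameComp M M' omegaRel ∧ sameComp N N' omegaRel ∧ sameComp O O' omegaRel ∧ ψ = mkR3 r M N O := by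
  rcases typesOp_cases h with h|h|h|h|h|h|h|h|h
  · (first
      | (obtain ⟨i, φ0, hx, -⟩ := hv _ h; simp [Prod.ext_iff] at hx)
      | simp [NatCl, PiCl, FuntimeCl, SigmaCl, EqCl, SubsetCl, Rel2Cl, Rel3Cl,
          Set.mem_setOf_eq] at h)
  · (first
      | (obtain ⟨i, φ0, hx, -⟩ := hv _ h; simp [Prod.ext_iff] at hx)
      | simp [NatCl, PiCl, FuntimeCl, SigmaCl, EqCl, SubsetCl, Rel2Cl, Rel3Cl,
          Set.mem_setOf_eq] at h)
  · (first
      | (obtain ⟨i, φ0, hx, -⟩ := hv _ h; simp [Prod.ext_iff] at hx)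
      | simp [NatCl, PiCl, FuntimeCl, SigmaCl, EqCl, SubsetCl, Rel2Cl, Rel3Cl,
          Set.mem_setOf_eq] at h)
  · (first
      | (obtain ⟨i, φ0, hx, -⟩ := hv _ h; simp [Prod.ext_iff] at hx)
      | simp [NatCl, PiCl, FuntimeCl, SigmaCl, EqCl, SubsetCl, Rel2Cl, Rel3Cl,
          Set.mem_setOf_eq] at h)
  · (first
      | (obtain ⟨i, φ0, hx, -⟩ := hv _ h; simp [Prod.ext_iff] at hx)
      | simp [NatCl, PiCl, FuntimeCl, SigmaCl, EqCl, SubsetCl, Rel2Cl, Rel3Cl,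
          Set.mem_setOf_eq] at h)
  · (first
      | (obtain ⟨i, φ0, hx, -⟩ := hv _ h; simp [Prod.ext_iff] at hx)
      | simp [NatCl, PiCl, FuntimeCl, SigmaCl, EqCl, SubsetCl, Rel2Cl, Rel3Cl,
          Set.mem_setOf_eq] at h)
  · (first
      | (obtain ⟨i, φ0, hx, -⟩ := hv _ h; simp [Prod.ext_iff] at hx)
      | simp [NatCl, PiCl, FuntimeCl, SigmaCl, EqCl, SubsetCl, Rel2Cl, Rel3Cl,
          Set.mem_setOf_eq] at h)
  case _ =>
    obtain ⟨r2, M2, M2', N2, N2', O2, O2', h1, h2, h3, h4, h5, h6⟩ := h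
    injection h1 with e0 e1 e2 e3; subst e0; subst e1; subst e2; subst e3
    exact ⟨M2', N2', O2', h2, h3, h4, h5, h6⟩
  · (first
      | (obtain ⟨i, φ0, hx, -⟩ := hv _ h; simp [Prod.ext_iff] at hx)
      | simp [NatCl, PiCl, FuntimeCl, SigmaCl, EqCl, SubsetCl, Rel2Cl, Rel3Cl,
          Set.mem_setOf_eq] at h)

lemma inv_r3_r {v T : PTS} (hv : VOk v) {r M N O C ψ} (h : ((C, rel3 r M N O, ψ) : Exp × Exp × Rel) ∈ TypesOp v T) :
    ∃ M' N' O', C = rel3 r M' N' O' ∧ sameComp M' M omegaRel ∧ sameComp N' N omegaRel ∧ sameComp O' O omegaRel ∧ ψ = mkR3 r M' N' O' := by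
  rcases typesOp_cases h with h|h|h|h|h|h|h|h|h
  · (first
      | (obtain ⟨i, φ0, hx, -⟩ := hv _ h; simp [Prod.ext_iff] at hx)
      | simp [NatCl, PiCl, FuntimeCl, SigmaCl, EqCl, SubsetCl, Rel2Cl, Rel3Cl,
          Set.mem_setOf_eq] at h)
  · (first
      | (obtain ⟨i, φ0, hx, -⟩ := hv _ h; simp [Prod.ext_iff] at hx)
      | simp [NatCl, PiCl, FuntimeCl, SigmaCl, EqCl, SubsetCl, Rel2Cl, Rel3Cl,
          Set.mem_setOf_eq] at h)
  · (first
      | (obtain ⟨i, φ0, hx, -⟩ := hv _ h; simp [Prod.ext_iff] at hx)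
      | simp [NatCl, PiCl, FuntimeCl, SigmaCl, EqCl, SubsetCl, Rel2Cl, Rel3Cl,
          Set.mem_setOf_eq] at h)
  · (first
      | (obtain ⟨i, φ0, hx, -⟩ := hv _ h; simp [Prod.ext_iff] at hx)
      | simp [NatCl, PiCl, FuntimeCl, SigmaCl, EqCl, SubsetCl, Rel2Cl, Rel3Cl,
          Set.mem_setOf_eq] at h)
  · (first
      | (obtain ⟨i, φ0, hx, -⟩ := hv _ h; simp [Prod.ext_iff] at hx)
      | simp [NatCl, PiCl, FuntimeCl, SigmaCl, EqCl, SubsetCl, Rel2Cl, Rel3Cl,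
          Set.mem_setOf_eq] at h)
  · (first
      | (obtain ⟨i, φ0, hx, -⟩ := hv _ h; simp [Prod.ext_iff] at hx)
      | simp [NatCl, PiCl, FuntimeCl, SigmaCl, EqCl, SubsetCl, Rel2Cl, Rel3Cl,
          Set.mem_setOf_eq] at h)
  · (first
      | (obtain ⟨i, φ0, hx, -⟩ := hv _ h; simp [Prod.ext_iff] at hx)
      | simp [NatCl, PiCl, FuntimeCl, SigmaCl, EqCl, SubsetCl, Rel2Cl, Rel3Cl,
          Set.mem_setOf_eq] at h)
  case _ =>
    obtain ⟨r2, M2, M2', N2, N2', O2, O2', h1, h2, h3, h4, h5, h6⟩ := h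
    injection h2 with e0 e1 e2 e3; subst e0; subst e1; subst e2; subst e3
    exact ⟨M2, N2, O2, h1, h3, h4, h5, h6⟩
  · (first
      | (obtain ⟨i, φ0, hx, -⟩ := hv _ h; simp [Prod.ext_iff] at hx)
      | simp [NatCl, PiCl, FuntimeCl, SigmaCl, EqCl, SubsetCl, Rel2Cl, Rel3Cl,
          Set.mem_setOf_eq] at h)

lemma inv_univ_l {v T : PTS} (hv : VOk v) {i C ψ} (h : ((Exp.univ i, C, ψ) : Exp × Exp × Rel) ∈ TypesOp v T) :
    ((Exp.univ i, C, ψ) : Exp × Exp × Rel) ∈ v := by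
  rcases typesOp_cases h with h|h|h|h|h|h|h|h|h
  · (first
      | (obtain ⟨i, φ0, hx, -⟩ := hv _ h; simp [Prod.ext_iff] at hx)
      | simp [NatCl, PiCl, FuntimeCl, SigmaCl, EqCl, SubsetCl, Rel2Cl, Rel3Cl,
          Set.mem_setOf_eq] at h)
  · (first
      | (obtain ⟨i, φ0, hx, -⟩ := hv _ h; simp [Prod.ext_iff] at hx)
      | simp [NatCl, PiCl, FuntimeCl, SigmaCl, EqCl, SubsetCl, Rel2Cl, Rel3Cl,
          Set.mem_setOf_eq] at h)
  · (first
      | (obtain ⟨i, φ0, hx, -⟩ := hv _ h; simp [Prod.ext_iff] at hx)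
      | simp [NatCl, PiCl, FuntimeCl, SigmaCl, EqCl, SubsetCl, Rel2Cl, Rel3Cl,
          Set.mem_setOf_eq] at h)
  · (first
      | (obtain ⟨i, φ0, hx, -⟩ := hv _ h; simp [Prod.ext_iff] at hx)
      | simp [NatCl, PiCl, FuntimeCl, SigmaCl, EqCl, SubsetCl, Rel2Cl, Rel3Cl,
          Set.mem_setOf_eq] at h)
  · (first
      | (obtain ⟨i, φ0, hx, -⟩ := hv _ h; simp [Prod.ext_iff] at hx)
      | simp [NatCl, PiCl, FuntimeCl, SigmaCl, EqCl, SubsetCl, Rel2Cl, Rel3Cl,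
          Set.mem_setOf_eq] at h)
  · (first
      | (obtain ⟨i, φ0, hx, -⟩ := hv _ h; simp [Prod.ext_iff] at hx)
      | simp [NatCl, PiCl, FuntimeCl, SigmaCl, EqCl, SubsetCl, Rel2Cl, Rel3Cl,
          Set.mem_setOf_eq] at h)
  · (first
      | (obtain ⟨i, φ0, hx, -⟩ := hv _ h; simp [Prod.ext_iff] at hx)
      | simp [NatCl, PiCl, FuntimeCl, SigmaCl, EqCl, SubsetCl, Rel2Cl, Rel3Cl,
          Set.mem_setOf_eq] at h)
  · (first
      | (obtain ⟨i, φ0, hx, -⟩ := hv _ h; simp [Prod.ext_iff] at hx)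
      | simp [NatCl, PiCl, FuntimeCl, SigmaCl, EqCl, SubsetCl, Rel2Cl, Rel3Cl,
          Set.mem_setOf_eq] at h)
  case _ =>
    exact h

lemma inv_univ_r {v T : PTS} (hv : VOk v) {i C ψ} (h : ((C, Exp.univ i, ψ) : Exp × Exp × Rel) ∈ TypesOp v T) :
    ((C, Exp.univ i, ψ) : Exp × Exp × Rel) ∈ v := by
  rcases typesOp_cases h with h|h|h|h|h|h|h|h|h
  · (first
      | (obtain ⟨i, φ0, hx, -⟩ := hv _ h; simp [Prod.ext_iff] at hx)
      | simp [NatCl, PiCl, FuntimeCl, SigmaCl, EqCl, SubsetCl, Rel2Cl, Rel3Cl,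
          Set.mem_setOf_eq] at h)
  · (first
      | (obtain ⟨i, φ0, hx, -⟩ := hv _ h; simp [Prod.ext_iff] at hx)
      | simp [NatCl, PiCl, FuntimeCl, SigmaCl, EqCl, SubsetCl, Rel2Cl, Rel3Cl,
          Set.mem_setOf_eq] at h)
  · (first
      | (obtain ⟨i, φ0, hx, -⟩ := hv _ h; simp [Prod.ext_iff] at hx)
      | simp [NatCl, PiCl, FuntimeCl, SigmaCl, EqCl, SubsetCl, Rel2Cl, Rel3Cl,
          Set.mem_setOf_eq] at h)
  · (first
      | (obtain ⟨i, φ0, hx, -⟩ := hv _ h; simp [Prod.ext_iff] at hx)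
      | simp [NatCl, PiCl, FuntimeCl, SigmaCl, EqCl, SubsetCl, Rel2Cl, Rel3Cl,
          Set.mem_setOf_eq] at h)
  · (first
      | (obtain ⟨i, φ0, hx, -⟩ := hv _ h; simp [Prod.ext_iff] at hx)
      | simp [NatCl, PiCl, FuntimeCl, SigmaCl, EqCl, SubsetCl, Rel2Cl, Rel3Cl,
          Set.mem_setOf_eq] at h)
  · (first
      | (obtain ⟨i, φ0, hx, -⟩ := hv _ h; simp [Prod.ext_iff] at hx)
      | simp [NatCl, PiCl, FuntimeCl, SigmaCl, EqCl, SubsetCl, Rel2Cl, Rel3Cl,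
          Set.mem_setOf_eq] at h)
  · (first
      | (obtain ⟨i, φ0, hx, -⟩ := hv _ h; simp [Prod.ext_iff] at hx)
      | simp [NatCl, PiCl, FuntimeCl, SigmaCl, EqCl, SubsetCl, Rel2Cl, Rel3Cl,
          Set.mem_setOf_eq] at h)
  · (first
      | (obtain ⟨i, φ0, hx, -⟩ := hv _ h; simp [Prod.ext_iff] at hx)
      | simp [NatCl, PiCl, FuntimeCl, SigmaCl, EqCl, SubsetCl, Rel2Cl, Rel3Cl,
          Set.mem_setOf_eq] at h)
  case _ =>
    exact h

/-! ### The simultaneous induction invariant -/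

structure GoodIn (T : PTS) (x : Exp × Exp × Rel) : Prop where
  mem : x ∈ T
  smem : ((x.2.1, x.1, x.2.2) : Exp × Exp × Rel) ∈ T
  vsym : Symmetric x.2.2
  vtrans : Transitive x.2.2
  funL : ∀ C ψ, ((x.1, C, ψ) : Exp × Exp × Rel) ∈ T →
    ψ = x.2.2 ∧ ((x.2.1, C, ψ) : Exp × Exp × Rel) ∈ T
  funR : ∀ C ψ, ((C, x.2.1, ψ) : Exp × Exp × Rel) ∈ T →
    ψ = x.2.2 ∧ ((C, x.1, ψ) : Exp × Exp × Rel) ∈ T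

section Helpers

variable {T s : PTS}

lemma good_sub (hs : ∀ y ∈ s, GoodIn T y) : s ⊆ T := fun y hy => (hs y hy).mem

lemma st_mem (hs : ∀ y ∈ s, GoodIn T y) {A A' α} (h : sameType A A' α s) : sameType A A' α T :=
  sameType_mono (good_sub hs) h

lemma st_sym (hs : ∀ y ∈ s, GoodIn T y) {A A' α} (h : sameType A A' α s) : sameType A' A α T := by
  obtain ⟨A0, A0', e1, e2, m⟩ := h
  exact ⟨A0', A0, e2, e1, (hs _ m).smem⟩

lemma st_per (hs : ∀ y ∈ s, GoodIn T y) {A A' α} (h : sameType A A' α s) : Symmetric α ∧ Transitive α := by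
  obtain ⟨A0, A0', e1, e2, m⟩ := h
  exact ⟨(hs _ m).vsym, (hs _ m).vtrans⟩

lemma st_L (hs : ∀ y ∈ s, GoodIn T y) {A A' α C ψ} (h : sameType A A' α s) (h' : sameType A C ψ T) :
    ψ = α ∧ sameType A' C ψ T := by
  obtain ⟨A0, A0', e1, e2, m⟩ := h
  obtain ⟨A1, C0, f1, f2, m'⟩ := h'
  have he : A1 = A0 := eval_det f1 e1
  subst he
  obtain ⟨hh1, hh2⟩ := (hs _ m).funL C0 ψ m'
  exact ⟨hh1, A0', C0, e2, f2, hh2⟩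

lemma st_R (hs : ∀ y ∈ s, GoodIn T y) {A A' α C ψ} (h : sameType A A' α s) (h' : sameType C A' ψ T) :
    ψ = α ∧ sameType C A ψ T := by
  obtain ⟨A0, A0', e1, e2, m⟩ := h
  obtain ⟨C0, A1, f1, f2, m'⟩ := h'
  have he : A1 = A0' := eval_det f2 e2
  subst he
  obtain ⟨hh1, hh2⟩ := (hs _ m).funR C0 ψ m'
  exact ⟨hh1, C0, A0, f1, e1, hh2⟩

lemma st_selfL (hs : ∀ y ∈ s, GoodIn T y) {A A' α} (h : sameType A A' α s) : sameType A A α T := by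
  obtain ⟨A0, A0', e1, e2, m⟩ := h
  exact ⟨A0, A0, e1, e1, ((hs _ m).funR A0 α (hs _ m).mem).2⟩

lemma st_selfR (hs : ∀ y ∈ s, GoodIn T y) {A A' α} (h : sameType A A' α s) : sameType A' A' α T := by
  obtain ⟨A0, A0', e1, e2, m⟩ := h
  exact ⟨A0', A0', e2, e2, ((hs _ m).funL A0' α (hs _ m).mem).2⟩

variable {α : Rel} {B B' : Exp} {β : Exp → Exp → Rel}

lemma fam_eqL (hs : ∀ y ∈ s, GoodIn T y) (hf : sameTypeFam α B B' β s) {V U' W'} (h1 : α V U') (h2 : α V W') : β V U' = β V W' :=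
  (st_L hs (hf V W' h2) (st_mem hs (hf V U' h1))).1

lemma fam_eqR (hs : ∀ y ∈ s, GoodIn T y) (hf : sameTypeFam α B B' β s) {U W V'} (h1 : α U V') (h2 : α W V') : β U V' = β W V' :=
  (st_R hs (hf W V' h2) (st_mem hs (hf U V' h1))).1

lemma fam_diag (hs : ∀ y ∈ s, GoodIn T y) (hsym : Symmetric α) (htr : Transitive α) (hf : sameTypeFam α B B' β s) {V V'} (hVV' : α V V') :
    β V V = β V V' ∧ β V' V = β V V' ∧ β V' V' = β V V' := by
  have hV'V : α V' V := hsym hVV'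
  have hVV : α V V := htr hVV' hV'V
  have hV'V' : α V' V' := htr hV'V hVV'
  refine ⟨fam_eqL hs hf hVV hVV', ?_, fam_eqR hs hf hV'V' hVV'⟩
  rw [fam_eqL hs hf hV'V hV'V']
  exact fam_eqR hs hf hV'V' hVV'

lemma fam_mem (hs : ∀ y ∈ s, GoodIn T y) (hf : sameTypeFam α B B' β s) : sameTypeFam α B B' β T :=
  sameTypeFam_mono (good_sub hs) hf

lemma fam_per (hs : ∀ y ∈ s, GoodIn T y) (hf : sameTypeFam α B B' β s) {V V'} (hVV' : α V V') :
    Symmetric (β V V') ∧ Transitive (β V V') :=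
  st_per hs (hf V V' hVV')

lemma fam_sym (hs : ∀ y ∈ s, GoodIn T y) (hsym : Symmetric α) (htr : Transitive α) (hf : sameTypeFam α B B' β s) : sameTypeFam α B' B β T := by
  intro V V' hVV'
  have h := st_sym hs (hf V' V (hsym hVV'))
  rwa [(fam_diag hs hsym htr hf hVV').2.1] at h

lemma fam_L (hs : ∀ y ∈ s, GoodIn T y) (hsym : Symmetric α) (htr : Transitive α) (hf : sameTypeFam α B B' β s) {V V' C ψ} (hVV' : α V V') (h' : sameType (subst B 0 V) C ψ T) :
    ψ = β V V' ∧ sameType (subst B' 0 V) C ψ T := by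
  have hVV : α V V := htr hVV' (hsym hVV')
  obtain ⟨e, hsame⟩ := st_L hs (hf V V hVV) h'
  rw [(fam_diag hs hsym htr hf hVV').1] at e
  exact ⟨e, hsame⟩

lemma fam_R (hs : ∀ y ∈ s, GoodIn T y) (hsym : Symmetric α) (htr : Transitive α) (hf : sameTypeFam α B B' β s) {V V' C ψ} (hVV' : α V V') (h' : sameType C (subst B' 0 V') ψ T) :
    ψ = β V V' ∧ sameType C (subst B 0 V') ψ T := by
  have hV'V' : α V' V' := htr (hsym hVV') hVV'
  obtain ⟨e, hsame⟩ := st_R hs (hf V' V' hV'V') h'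
  rw [(fam_diag hs hsym htr hf hVV').2.2] at e
  exact ⟨e, hsame⟩

end Helpers

/-! ### Congruence lemmas for the φ-builders -/

lemma sameCompOpen_congr {α β β'} {X Y : Exp}
    (h : ∀ V V', α V V' → β V V' = β' V V') :
    sameCompOpen α X Y β ↔ sameCompOpen α X Y β' := by
  constructor <;> intro hh V V' hVV'
  · rw [← h V V' hVV']; exact hh V V' hVV'
  · rw [h V V' hVV']; exact hh V V' hVV'

lemma mkPi_congr {α β β'} (h : ∀ V V', α V V' → β V V' = β' V V') :
    mkPi α β = mkPi α β' := by
  funext F F'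
  exact propext (exists_congr fun N => exists_congr fun N' =>
    and_congr_right fun _ => and_congr_right fun _ => sameCompOpen_congr h)

lemma mkSg_congr {α β β'} (h : ∀ V V', α V V' → β V V' = β' V V') :
    mkSg α β = mkSg α β' := by
  funext p p'
  refine propext (exists_congr fun U => exists_congr fun V =>
    exists_congr fun U' => exists_congr fun V' =>
    and_congr_right fun _ => and_congr_right fun _ =>
    and_congr_right fun hUU' => ?_)
  rw [h U U' hUU']

lemma mkSub_congr {α β β'} (h : ∀ V V', α V V' → β V V' = β' V V') :
    mkSub α β = mkSub α β' := by
  funext V V'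
  refine propext (and_congr_right fun hVV' => ?_)
  rw [h V V' hVV']

/-! ### cost-aware computation lemmas -/

lemma sameComp_num_iff {M k} : sameComp M (num k) omegaRel ↔ Eval M (num k) := by
  constructor
  · intro h
    obtain ⟨j, h1, h2⟩ := sameComp_omega_iff.1 h
    rwa [eval_val_eq (isVal_num k) h2] at h1
  · intro h
    exact sameComp_omega_iff.2 ⟨k, h, eval_val (isVal_num k)⟩

lemma mkEq_congr {α : Rel} {M M' N N'} (hsym : Symmetric α) (htr : Transitive α)
    (hM : sameComp M M' α) (hN : sameComp N N' α) :
    mkEq M N α = mkEq M' N' α := by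
  funext t t'
  exact propext (and_congr_right fun _ => and_congr_right fun _ =>
    sameComp_congr hsym htr hM hN)

lemma mkR2_congr {r : ℕ → ℕ → Prop} {M M' N N'}
    (hM : sameComp M M' omegaRel) (hN : sameComp N N' omegaRel) :
    mkR2 r M N = mkR2 r M' N' := by
  obtain ⟨j, hM1, hM2⟩ := sameComp_omega_iff.1 hM
  obtain ⟨l, hN1, hN2⟩ := sameComp_omega_iff.1 hN
  funext t t'
  refine propext (and_congr_right fun _ => and_congr_right fun _ =>
    exists_congr fun m => exists_congr fun n => and_congr_right fun _ => ?_)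
  rw [sameComp_num_iff, sameComp_num_iff, sameComp_num_iff, sameComp_num_iff]
  constructor
  · rintro ⟨e1, e2⟩
    rw [← eval_det e1 hM1] at hM2
    rw [← eval_det e2 hN1] at hN2
    exact ⟨hM2, hN2⟩
  · rintro ⟨e1, e2⟩
    rw [← eval_det e1 hM2] at hM1
    rw [← eval_det e2 hN2] at hN1
    exact ⟨hM1, hN1⟩

lemma mkR3_congr {r : ℕ → ℕ → ℕ → Prop} {M M' N N' O O'}
    (hM : sameComp M M' omegaRel) (hN : sameComp N N' omegaRel)
    (hO : sameComp O O' omegaRel) :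
    mkR3 r M N O = mkR3 r M' N' O' := by
  obtain ⟨j, hM1, hM2⟩ := sameComp_omega_iff.1 hM
  obtain ⟨l, hN1, hN2⟩ := sameComp_omega_iff.1 hN
  obtain ⟨q, hO1, hO2⟩ := sameComp_omega_iff.1 hO
  funext t t'
  refine propext (and_congr_right fun _ => and_congr_right fun _ =>
    exists_congr fun m => exists_congr fun n => exists_congr fun o =>
    and_congr_right fun _ => ?_)
  rw [sameComp_num_iff, sameComp_num_iff, sameComp_num_iff, sameComp_num_iff,
    sameComp_num_iff, sameComp_num_iff]
  constructor
  · rintro ⟨e1, e2, e3⟩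
    rw [← eval_det e1 hM1] at hM2
    rw [← eval_det e2 hN1] at hN2
    rw [← eval_det e3 hO1] at hO2
    exact ⟨hM2, hN2, hO2⟩
  · rintro ⟨e1, e2, e3⟩
    rw [← eval_det e1 hM2] at hM1
    rw [← eval_det e2 hN2] at hN1
    rw [← eval_det e3 hO2] at hO1
    exact ⟨hM1, hN1, hO1⟩

lemma sameCComp_symm {γ : Rel} {P M M'} (hγ : Symmetric γ)
    (h : sameCComp M M' γ P) : sameCComp M' M γ P := by
  obtain ⟨h0, c, c', V, V', p, e1, e2, e3, e4, e5⟩ := h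
  exact ⟨h0, c', c, V', V, p, e2, e1, hγ e3, e4, by omega⟩

lemma sameCComp_trans {γ : Rel} {P M M' M''} (hγ : Transitive γ)
    (h : sameCComp M M' γ P) (h' : sameCComp M' M'' γ P) :
    sameCComp M M'' γ P := by
  obtain ⟨h0, c, c', V, V', p, e1, e2, e3, e4, e5⟩ := h
  obtain ⟨_, d, d', W, W', q, f1, f2, f3, f4, f5⟩ := h'
  obtain ⟨ecd, eVW⟩ := evalC_det e2 f1
  subst ecd; subst eVW
  have hqp : q = p := num_inj (eval_det f4 e4)
  exact ⟨h0, c, d', V, W', p, e1, f2, hγ e3 f3, e4, by omega⟩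

lemma sameCCompOpen_imp {α : Rel} {β β' : Exp → Exp → Rel} {X Y P P' : Exp}
    (hsym : Symmetric α) (htr : Transitive α)
    (hβ : ∀ V V', α V V' → β V V' = β' V V')
    (hP : ∀ V V', α V V' → ∃ k, Eval (subst P 0 V) (num k) ∧ Eval (subst P' 0 V) (num k))
    (h : sameCCompOpen α X Y β P) : sameCCompOpen α X Y β' P' := by
  obtain ⟨h1, h2⟩ := h
  constructor
  · intro V V' hVV'
    obtain ⟨k, hP1, hP2⟩ := hP V V' hVV'
    have hV'V' : α V' V' := htr (hsym hVV') hVV'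
    obtain ⟨k2, hQ1, hQ2⟩ := hP V' V' hV'V'
    obtain ⟨j, hR1, hR2⟩ := sameComp_omega_iff.1 (h1 V V' hVV')
    have e1 : j = k := num_inj (eval_det hR1 hP1)
    have e2 : j = k2 := num_inj (eval_det hR2 hQ1)
    subst e1; subst e2
    exact sameComp_omega_iff.2 ⟨j, hP2, hQ2⟩
  · intro V V' hVV'
    rw [← hβ V V' hVV']
    obtain ⟨k, hP1, hP2⟩ := hP V V' hVV'
    obtain ⟨h0, c, c', W, W', p, e1, e2, e3, e4, e5⟩ := h2 V V' hVV'
    have : p = k := num_inj (eval_det e4 hP1)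
    subst this
    exact ⟨sameComp_omega_iff.2 ⟨p, hP2, hP2⟩, c, c', W, W', p, e1, e2, e3, hP2, e5⟩

lemma mkFt_congr {α : Rel} {β β' : Exp → Exp → Rel} {P P' : Exp}
    (hsym : Symmetric α) (htr : Transitive α)
    (hβ : ∀ V V', α V V' → β V V' = β' V V')
    (hP : ∀ V V', α V V' → ∃ k, Eval (subst P 0 V) (num k) ∧ Eval (subst P' 0 V) (num k)) :
    mkFt α β P = mkFt α β' P' := by
  funext F F'
  refine propext (exists_congr fun N => exists_congr fun N' =>
    and_congr_right fun _ => and_congr_right fun _ => ⟨?_, ?_⟩)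
  · exact sameCCompOpen_imp hsym htr hβ hP
  · refine sameCCompOpen_imp hsym htr (fun V V' h => (hβ V V' h).symm) ?_
    intro V V' h
    obtain ⟨k, h1, h2⟩ := hP V V' h
    exact ⟨k, h2, h1⟩

/-! ### Goodness of each clause -/

section Clauses

variable {v T s : PTS}

lemma good_nat (hv : VOk v) (hT : TypesOp v T = T) :
    GoodIn T ((Exp.nat, Exp.nat, omegaRel) : Exp × Exp × Rel) := by
  have hTm : ∀ {y : Exp × Exp × Rel}, y ∈ TypesOp v T → y ∈ T := fun h => hT ▸ h
  have hmem : ((Exp.nat, Exp.nat, omegaRel) : Exp × Exp × Rel) ∈ T :=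
    hTm (typesOp_of_nat ⟨rfl, rfl, rfl⟩)
  refine ⟨hmem, hmem, omegaRel_symm, omegaRel_trans, ?_, ?_⟩
  · intro C ψ h'
    rw [← hT] at h'
    obtain ⟨rfl, rfl⟩ := inv_nat_l hv h'
    exact ⟨rfl, hmem⟩
  · intro C ψ h'
    rw [← hT] at h'
    obtain ⟨rfl, rfl⟩ := inv_nat_r hv h'
    exact ⟨rfl, hmem⟩

lemma good_r2 (hv : VOk v) (hT : TypesOp v T = T) {r M M' N N'}
    (h3 : sameComp M M' omegaRel) (h4 : sameComp N N' omegaRel) :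
    GoodIn T ((rel2 r M N, rel2 r M' N', mkR2 r M N) : Exp × Exp × Rel) := by
  have hTm : ∀ {y : Exp × Exp × Rel}, y ∈ TypesOp v T → y ∈ T := fun h => hT ▸ h
  refine ⟨hTm (typesOp_of_r2 (r2Cl_intro h3 h4)), ?_, ?_, ?_, ?_, ?_⟩
  · rw [mkR2_congr h3 h4]
    exact hTm (typesOp_of_r2 (r2Cl_intro (sameComp_symm omegaRel_symm h3)
      (sameComp_symm omegaRel_symm h4)))
  · rintro t t' ⟨rfl, rfl, hc⟩
    exact ⟨rfl, rfl, hc⟩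
  · rintro t t' t'' ⟨rfl, rfl, hc⟩ ⟨-, rfl, -⟩
    exact ⟨rfl, rfl, hc⟩
  · intro C ψ h'
    rw [← hT] at h'
    obtain ⟨M2', N2', rfl, hM2, hN2, rfl⟩ := inv_r2_l hv h'
    refine ⟨rfl, ?_⟩
    rw [mkR2_congr h3 h4]
    exact hTm (typesOp_of_r2 (r2Cl_intro
      (sameComp_trans omegaRel_trans (sameComp_symm omegaRel_symm h3) hM2)
      (sameComp_trans omegaRel_trans (sameComp_symm omegaRel_symm h4) hN2)))
  · intro C ψ h'
    rw [← hT] at h'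
    obtain ⟨M2, N2, rfl, hM2, hN2, rfl⟩ := inv_r2_r hv h'
    have hM21 : sameComp M2 M omegaRel :=
      sameComp_trans omegaRel_trans hM2 (sameComp_symm omegaRel_symm h3)
    have hN21 : sameComp N2 N omegaRel :=
      sameComp_trans omegaRel_trans hN2 (sameComp_symm omegaRel_symm h4)
    exact ⟨mkR2_congr hM21 hN21, hTm (typesOp_of_r2 (r2Cl_intro hM21 hN21))⟩

lemma good_r3 (hv : VOk v) (hT : TypesOp v T = T) {r M M' N N' O O'}
    (h3 : sameComp M M' omegaRel) (h4 : sameComp N N' omegaRel)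
    (h5 : sameComp O O' omegaRel) :
    GoodIn T ((rel3 r M N O, rel3 r M' N' O', mkR3 r M N O) : Exp × Exp × Rel) := by
  have hTm : ∀ {y : Exp × Exp × Rel}, y ∈ TypesOp v T → y ∈ T := fun h => hT ▸ h
  refine ⟨hTm (typesOp_of_r3 (r3Cl_intro h3 h4 h5)), ?_, ?_, ?_, ?_, ?_⟩
  · rw [mkR3_congr h3 h4 h5]
    exact hTm (typesOp_of_r3 (r3Cl_intro (sameComp_symm omegaRel_symm h3)
      (sameComp_symm omegaRel_symm h4) (sameComp_symm omegaRel_symm h5)))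
  · rintro t t' ⟨rfl, rfl, hc⟩
    exact ⟨rfl, rfl, hc⟩
  · rintro t t' t'' ⟨rfl, rfl, hc⟩ ⟨-, rfl, -⟩
    exact ⟨rfl, rfl, hc⟩
  · intro C ψ h'
    rw [← hT] at h'
    obtain ⟨M2', N2', O2', rfl, hM2, hN2, hO2, rfl⟩ := inv_r3_l hv h'
    refine ⟨rfl, ?_⟩
    rw [mkR3_congr h3 h4 h5]
    exact hTm (typesOp_of_r3 (r3Cl_intro
      (sameComp_trans omegaRel_trans (sameComp_symm omegaRel_symm h3) hM2)
      (sameComp_trans omegaRel_trans (sameComp_symm omegaRel_symm h4) hN2)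
      (sameComp_trans omegaRel_trans (sameComp_symm omegaRel_symm h5) hO2)))
  · intro C ψ h'
    rw [← hT] at h'
    obtain ⟨M2, N2, O2, rfl, hM2, hN2, hO2, rfl⟩ := inv_r3_r hv h'
    have hM21 : sameComp M2 M omegaRel :=
      sameComp_trans omegaRel_trans hM2 (sameComp_symm omegaRel_symm h3)
    have hN21 : sameComp N2 N omegaRel :=
      sameComp_trans omegaRel_trans hN2 (sameComp_symm omegaRel_symm h4)
    have hO21 : sameComp O2 O omegaRel :=
      sameComp_trans omegaRel_trans hO2 (sameComp_symm omegaRel_symm h5)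
    exact ⟨mkR3_congr hM21 hN21 hO21, hTm (typesOp_of_r3 (r3Cl_intro hM21 hN21 hO21))⟩

lemma good_univ (hv : VOk v) (hT : TypesOp v T = T) {x} (hx : x ∈ v) :
    GoodIn T x := by
  have hTm : ∀ {y : Exp × Exp × Rel}, y ∈ TypesOp v T → y ∈ T := fun h => hT ▸ h
  obtain ⟨i, φ0, hxeq, hsymφ, htrφ, huniq⟩ := hv _ hx
  subst hxeq
  refine ⟨hTm (typesOp_of_v hx), hTm (typesOp_of_v hx), hsymφ, htrφ, ?_, ?_⟩
  · intro C ψ h'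
    rw [← hT] at h'
    have hmem := inv_univ_l hv h'
    obtain ⟨j, φ1, he, -, -, -⟩ := hv _ hmem
    have e1 : C = Exp.univ j ∧ ψ = φ1 := by
      have := congrArg Prod.snd he
      have ei : i = j := by
        have := congrArg Prod.fst he
        simpa using this
      subst ei
      simpa [Prod.ext_iff] using he
    obtain ⟨rfl, rfl⟩ := e1
    have ei : i = j := by
      have := congrArg Prod.fst he
      simpa using this
    subst ei
    exact ⟨huniq _ hmem, hTm (typesOp_of_v hmem)⟩
  · intro C ψ h'
    rw [← hT] at h'
    have hmem := inv_univ_r hv h'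
    obtain ⟨j, φ1, he, -, -, -⟩ := hv _ hmem
    have ei : i = j := by
      have := congrArg (fun y => y.2.1) he
      simpa using this
    subst ei
    have e1 : C = Exp.univ i ∧ ψ = φ1 := by
      simpa [Prod.ext_iff] using he
    obtain ⟨rfl, rfl⟩ := e1
    exact ⟨huniq _ hmem, hTm (typesOp_of_v hmem)⟩

end Clauses


section Clauses2

variable {v T s : PTS}

lemma good_eq (hv : VOk v) (hT : TypesOp v T = T) (hs : ∀ y ∈ s, GoodIn T y)
    {A A' M M' N N' α} (h3 : sameType A A' α s) (h4 : sameComp M M' α)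
    (h5 : sameComp N N' α) :
    GoodIn T ((eqty A M N, eqty A' M' N', mkEq M N α) : Exp × Exp × Rel) := by
  have hTm : ∀ {y : Exp × Exp × Rel}, y ∈ TypesOp v T → y ∈ T := fun h => hT ▸ h
  obtain ⟨hαs, hαt⟩ := st_per hs h3
  refine ⟨hTm (typesOp_of_eq (eqCl_intro (st_mem hs h3) h4 h5)), ?_, ?_, ?_, ?_, ?_⟩
  · rw [mkEq_congr hαs hαt h4 h5]
    exact hTm (typesOp_of_eq (eqCl_intro (st_sym hs h3)
      (sameComp_symm hαs h4) (sameComp_symm hαs h5)))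
  · rintro t t' ⟨rfl, rfl, hc⟩
    exact ⟨rfl, rfl, hc⟩
  · rintro t t' t'' ⟨rfl, rfl, hc⟩ ⟨-, rfl, -⟩
    exact ⟨rfl, rfl, hc⟩
  · intro C ψ h'
    rw [← hT] at h'
    obtain ⟨A2', M2', N2', α₂, rfl, hA2, hM2, hN2, rfl⟩ := inv_eq_l hv h'
    obtain ⟨rfl, hA1'2⟩ := st_L hs h3 hA2
    refine ⟨rfl, ?_⟩
    rw [mkEq_congr hαs hαt h4 h5]
    exact hTm (typesOp_of_eq (eqCl_intro hA1'2
      (sameComp_trans hαt (sameComp_symm hαs h4) hM2)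
      (sameComp_trans hαt (sameComp_symm hαs h5) hN2)))
  · intro C ψ h'
    rw [← hT] at h'
    obtain ⟨A2, M2, N2, α₂, rfl, hA2, hM2, hN2, rfl⟩ := inv_eq_r hv h'
    obtain ⟨rfl, hA21⟩ := st_R hs h3 hA2
    have hM21 : sameComp M2 M α₂ := sameComp_trans hαt hM2 (sameComp_symm hαs h4)
    have hN21 : sameComp N2 N α₂ := sameComp_trans hαt hN2 (sameComp_symm hαs h5)
    exact ⟨mkEq_congr hαs hαt hM21 hN21,
      hTm (typesOp_of_eq (eqCl_intro hA21 hM21 hN21))⟩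

lemma good_pi (hv : VOk v) (hT : TypesOp v T = T) (hs : ∀ y ∈ s, GoodIn T y)
    {A A' B B' α β} (h3 : sameType A A' α s) (h4 : sameTypeFam α B B' β s) :
    GoodIn T ((pi A B, pi A' B', mkPi α β) : Exp × Exp × Rel) := by
  have hTm : ∀ {y : Exp × Exp × Rel}, y ∈ TypesOp v T → y ∈ T := fun h => hT ▸ h
  obtain ⟨hαs, hαt⟩ := st_per hs h3
  refine ⟨hTm (typesOp_of_pi (piCl_intro (st_mem hs h3) (fam_mem hs h4))),
    hTm (typesOp_of_pi (piCl_intro (st_sym hs h3) (fam_sym hs hαs hαt h4))),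
    ?_, ?_, ?_, ?_⟩
  · rintro F F' ⟨Na, Nb, rfl, rfl, hNN⟩
    refine ⟨Nb, Na, rfl, rfl, fun V V' hVV' => ?_⟩
    have h1 := hNN V' V (hαs hVV')
    have h2 := sameComp_symm (fam_per hs h4 (hαs hVV')).1 h1
    rwa [(fam_diag hs hαs hαt h4 hVV').2.1] at h2
  · rintro F F' F'' ⟨Na, Nb, rfl, eb, hNN⟩ ⟨Nb', Nc, eb', rfl, hNN'⟩
    rw [eb'] at eb
    injection eb with e
    subst e
    refine ⟨Na, Nc, rfl, rfl, fun V V' hVV' => ?_⟩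
    have hV'V' : α V' V' := hαt (hαs hVV') hVV'
    have h1 := hNN V V' hVV'
    have h2 := hNN' V' V' hV'V'
    rw [(fam_diag hs hαs hαt h4 hVV').2.2] at h2
    exact sameComp_trans (fam_per hs h4 hVV').2 h1 h2
  · intro C ψ h'
    rw [← hT] at h'
    obtain ⟨A2', B2', α₂, β₂, rfl, hA2, hB2, rfl⟩ := inv_pi_l hv h'
    obtain ⟨rfl, hA1'2⟩ := st_L hs h3 hA2
    have hβeq : ∀ V V', α₂ V V' → β₂ V V' = β V V' :=
      fun V V' hVV' => (fam_L hs hαs hαt h4 hVV' (hB2 V V' hVV')).1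
    have hfam' : sameTypeFam α₂ B' B2' β₂ T :=
      fun V V' hVV' => (fam_L hs hαs hαt h4 hVV' (hB2 V V' hVV')).2
    exact ⟨mkPi_congr hβeq, hTm (typesOp_of_pi (piCl_intro hA1'2 hfam'))⟩
  · intro C ψ h'
    rw [← hT] at h'
    obtain ⟨A2, B2, α₂, β₂, rfl, hA2, hB2, rfl⟩ := inv_pi_r hv h'
    obtain ⟨rfl, hA21⟩ := st_R hs h3 hA2
    have hβeq : ∀ V V', α₂ V V' → β₂ V V' = β V V' :=
      fun V V' hVV' => (fam_R hs hαs hαt h4 hVV' (hB2 V V' hVV')).1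
    have hfam' : sameTypeFam α₂ B2 B β₂ T :=
      fun V V' hVV' => (fam_R hs hαs hαt h4 hVV' (hB2 V V' hVV')).2
    exact ⟨mkPi_congr hβeq, hTm (typesOp_of_pi (piCl_intro hA21 hfam'))⟩

lemma good_sg (hv : VOk v) (hT : TypesOp v T = T) (hs : ∀ y ∈ s, GoodIn T y)
    {A A' B B' α β} (h3 : sameType A A' α s) (h4 : sameTypeFam α B B' β s) :
    GoodIn T ((sigma A B, sigma A' B', mkSg α β) : Exp × Exp × Rel) := by
  have hTm : ∀ {y : Exp × Exp × Rel}, y ∈ TypesOp v T → y ∈ T := fun h => hT ▸ h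
  obtain ⟨hαs, hαt⟩ := st_per hs h3
  refine ⟨hTm (typesOp_of_sg (sgCl_intro (st_mem hs h3) (fam_mem hs h4))),
    hTm (typesOp_of_sg (sgCl_intro (st_sym hs h3) (fam_sym hs hαs hαt h4))),
    ?_, ?_, ?_, ?_⟩
  · rintro p p' ⟨U, V, U', V', rfl, rfl, hUU', hβ⟩
    refine ⟨U', V', U, V, rfl, rfl, hαs hUU', ?_⟩
    have h2 := (fam_per hs h4 hUU').1 hβ
    rwa [(fam_diag hs hαs hαt h4 hUU').2.1]
  · rintro p p' p'' ⟨U, V, U', V', rfl, ea, hUU', hβ⟩ ⟨U2, V2, U'', V'', eb, rfl, hUU'', hβ'⟩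
    rw [ea] at eb
    injection eb with e1 e2
    subst e1; subst e2
    have hUU2 : α U U'' := hαt hUU' hUU''
    refine ⟨U, V, U'', V'', rfl, rfl, hUU2, ?_⟩
    have e3 : β U U' = β U U'' := fam_eqL hs h4 hUU' hUU2
    have e4 : β U' U'' = β U U'' := fam_eqR hs h4 hUU'' hUU2
    rw [e3] at hβ
    rw [e4] at hβ'
    exact (fam_per hs h4 hUU2).2 hβ hβ'
  · intro C ψ h'
    rw [← hT] at h'
    obtain ⟨A2', B2', α₂, β₂, rfl, hA2, hB2, rfl⟩ := inv_sg_l hv h'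
    obtain ⟨rfl, hA1'2⟩ := st_L hs h3 hA2
    have hβeq : ∀ V V', α₂ V V' → β₂ V V' = β V V' :=
      fun V V' hVV' => (fam_L hs hαs hαt h4 hVV' (hB2 V V' hVV')).1
    have hfam' : sameTypeFam α₂ B' B2' β₂ T :=
      fun V V' hVV' => (fam_L hs hαs hαt h4 hVV' (hB2 V V' hVV')).2
    exact ⟨mkSg_congr hβeq, hTm (typesOp_of_sg (sgCl_intro hA1'2 hfam'))⟩
  · intro C ψ h'
    rw [← hT] at h'
    obtain ⟨A2, B2, α₂, β₂, rfl, hA2, hB2, rfl⟩ := inv_sg_r hv h'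
    obtain ⟨rfl, hA21⟩ := st_R hs h3 hA2
    have hβeq : ∀ V V', α₂ V V' → β₂ V V' = β V V' :=
      fun V V' hVV' => (fam_R hs hαs hαt h4 hVV' (hB2 V V' hVV')).1
    have hfam' : sameTypeFam α₂ B2 B β₂ T :=
      fun V V' hVV' => (fam_R hs hαs hαt h4 hVV' (hB2 V V' hVV')).2
    exact ⟨mkSg_congr hβeq, hTm (typesOp_of_sg (sgCl_intro hA21 hfam'))⟩

lemma good_sub' (hv : VOk v) (hT : TypesOp v T = T) (hs : ∀ y ∈ s, GoodIn T y)
    {A A' B B' α β} (h3 : sameType A A' α s) (h4 : sameTypeFam α B B' β s) :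
    GoodIn T ((subset A B, subset A' B', mkSub α β) : Exp × Exp × Rel) := by
  have hTm : ∀ {y : Exp × Exp × Rel}, y ∈ TypesOp v T → y ∈ T := fun h => hT ▸ h
  obtain ⟨hαs, hαt⟩ := st_per hs h3
  refine ⟨hTm (typesOp_of_sub (subCl_intro (st_mem hs h3) (fam_mem hs h4))),
    hTm (typesOp_of_sub (subCl_intro (st_sym hs h3) (fam_sym hs hαs hαt h4))),
    ?_, ?_, ?_, ?_⟩
  · rintro V V' ⟨hVV', U, U', hβ⟩
    refine ⟨hαs hVV', U', U, ?_⟩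
    have h2 := (fam_per hs h4 hVV').1 hβ
    rwa [(fam_diag hs hαs hαt h4 hVV').2.1]
  · rintro V V' V'' ⟨hVV', U, U', hβ⟩ ⟨hV'V'', W, W', hβ'⟩
    have hVV'' : α V V'' := hαt hVV' hV'V''
    refine ⟨hVV'', U, U', ?_⟩
    rwa [← fam_eqL hs h4 hVV' hVV'']
  · intro C ψ h'
    rw [← hT] at h'
    obtain ⟨A2', B2', α₂, β₂, rfl, hA2, hB2, rfl⟩ := inv_sub_l hv h'
    obtain ⟨rfl, hA1'2⟩ := st_L hs h3 hA2
    have hβeq : ∀ V V', α₂ V V' → β₂ V V' = β V V' :=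
      fun V V' hVV' => (fam_L hs hαs hαt h4 hVV' (hB2 V V' hVV')).1
    have hfam' : sameTypeFam α₂ B' B2' β₂ T :=
      fun V V' hVV' => (fam_L hs hαs hαt h4 hVV' (hB2 V V' hVV')).2
    exact ⟨mkSub_congr hβeq, hTm (typesOp_of_sub (subCl_intro hA1'2 hfam'))⟩
  · intro C ψ h'
    rw [← hT] at h'
    obtain ⟨A2, B2, α₂, β₂, rfl, hA2, hB2, rfl⟩ := inv_sub_r hv h'
    obtain ⟨rfl, hA21⟩ := st_R hs h3 hA2
    have hβeq : ∀ V V', α₂ V V' → β₂ V V' = β V V' :=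
      fun V V' hVV' => (fam_R hs hαs hαt h4 hVV' (hB2 V V' hVV')).1
    have hfam' : sameTypeFam α₂ B2 B β₂ T :=
      fun V V' hVV' => (fam_R hs hαs hαt h4 hVV' (hB2 V V' hVV')).2
    exact ⟨mkSub_congr hβeq, hTm (typesOp_of_sub (subCl_intro hA21 hfam'))⟩

end Clauses2

lemma sameCComp_swapP {γ : Rel} {M M' P Q : Exp} {k : ℕ}
    (hP : Eval P (num k)) (hQ : Eval Q (num k))
    (h : sameCComp M M' γ P) : sameCComp M M' γ Q := by
  obtain ⟨h0, c, c', V, V', p, e1, e2, e3, e4, e5⟩ := h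
  rw [num_inj (eval_det e4 hP)] at e5
  exact ⟨sameComp_omega_iff.2 ⟨k, hQ, hQ⟩, c, c', V, V', k, e1, e2, e3, hQ, e5⟩

section Funtime

variable {v T s : PTS}

lemma good_ft (hv : VOk v) (hT : TypesOp v T = T) (hs : ∀ y ∈ s, GoodIn T y)
    {A A' B B' P P' α β} (h3 : sameType A A' α s) (h4 : sameTypeFam α B B' β s)
    (h5 : sameCompOpen α P P' (fun _ _ => omegaRel)) :
    GoodIn T ((funtime A B P, funtime A' B' P', mkFt α β P) : Exp × Exp × Rel) := by
  have hTm : ∀ {y : Exp × Exp × Rel}, y ∈ TypesOp v T → y ∈ T := fun h => hT ▸ h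
  obtain ⟨hαs, hαt⟩ := st_per hs h3
  have hPk : ∀ V V', α V V' →
      ∃ k, Eval (subst P 0 V) (num k) ∧ Eval (subst P' 0 V) (num k) :=
    fun V V' hVV' => sameComp_omega_iff.1 (h5 V V (hαt hVV' (hαs hVV')))
  have hPk' : ∀ V V', α V V' →
      ∃ k, Eval (subst P' 0 V) (num k) ∧ Eval (subst P 0 V) (num k) := by
    intro V V' hVV'
    obtain ⟨k, a, b⟩ := hPk V V' hVV'
    exact ⟨k, b, a⟩
  have hPid : ∀ V V', α V V' →
      ∃ k, Eval (subst P 0 V) (num k) ∧ Eval (subst P 0 V) (num k) := by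
    intro V V' hVV'
    obtain ⟨k, a, _⟩ := hPk V V' hVV'
    exact ⟨k, a, a⟩
  have hP'P : sameCompOpen α P' P (fun _ _ => omegaRel) :=
    fun V V' hVV' => sameComp_symm omegaRel_symm (h5 V' V (hαs hVV'))
  refine ⟨hTm (typesOp_of_ft (ftCl_intro (st_mem hs h3) (fam_mem hs h4) h5)),
    ?_, ?_, ?_, ?_, ?_⟩
  · rw [mkFt_congr hαs hαt (fun _ _ _ => rfl) hPk]
    exact hTm (typesOp_of_ft (ftCl_intro (st_sym hs h3) (fam_sym hs hαs hαt h4) hP'P))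
  · rintro F F' ⟨Na, Nb, rfl, rfl, hNN⟩
    obtain ⟨hc, hb⟩ := hNN
    refine ⟨Nb, Na, rfl, rfl, hc, fun V V' hVV' => ?_⟩
    have h1 := hb V' V (hαs hVV')
    have h2 := sameCComp_symm (fam_per hs h4 (hαs hVV')).1 h1
    rw [(fam_diag hs hαs hαt h4 hVV').2.1] at h2
    obtain ⟨k, e1, e2⟩ := sameComp_omega_iff.1 (hc V V' hVV')
    exact sameCComp_swapP e2 e1 h2
  · rintro F F' F'' ⟨Na, Nb, rfl, eb, hNN⟩ ⟨Nb', Nc, eb', rfl, hNN'⟩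
    rw [eb'] at eb
    injection eb with e
    subst e
    obtain ⟨hc, hb⟩ := hNN
    obtain ⟨hc', hb'⟩ := hNN'
    refine ⟨Na, Nc, rfl, rfl, hc, fun V V' hVV' => ?_⟩
    have hV'V' : α V' V' := hαt (hαs hVV') hVV'
    have h1 := hb V V' hVV'
    have h2 := hb' V' V' hV'V'
    rw [(fam_diag hs hαs hαt h4 hVV').2.2] at h2
    obtain ⟨k, e1, e2⟩ := sameComp_omega_iff.1 (hc V V' hVV')
    exact sameCComp_trans (fam_per hs h4 hVV').2 h1 (sameCComp_swapP e2 e1 h2)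
  · intro C ψ h'
    rw [← hT] at h'
    obtain ⟨A2', B2', P2', α₂, β₂, rfl, hA2, hB2, hP2, rfl⟩ := inv_ft_l hv h'
    obtain ⟨rfl, hA1'2⟩ := st_L hs h3 hA2
    have hβeq : ∀ V V', α₂ V V' → β₂ V V' = β V V' :=
      fun V V' hVV' => (fam_L hs hαs hαt h4 hVV' (hB2 V V' hVV')).1
    have hfam' : sameTypeFam α₂ B' B2' β₂ T :=
      fun V V' hVV' => (fam_L hs hαs hαt h4 hVV' (hB2 V V' hVV')).2
    have hPP2 : sameCompOpen α₂ P' P2' (fun _ _ => omegaRel) :=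
      fun V V' hVV' => sameComp_trans omegaRel_trans
        (sameComp_symm omegaRel_symm (h5 V V (hαt hVV' (hαs hVV'))))
        (hP2 V V' hVV')
    refine ⟨mkFt_congr hαs hαt hβeq hPid, ?_⟩
    rw [show mkFt α₂ β₂ P = mkFt α₂ β₂ P' from
      mkFt_congr hαs hαt (fun _ _ _ => rfl) hPk]
    exact hTm (typesOp_of_ft (ftCl_intro hA1'2 hfam' hPP2))
  · intro C ψ h'
    rw [← hT] at h'
    obtain ⟨A2, B2, P2, α₂, β₂, rfl, hA2, hB2, hP2, rfl⟩ := inv_ft_r hv h'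
    obtain ⟨rfl, hA21⟩ := st_R hs h3 hA2
    have hβeq : ∀ V V', α₂ V V' → β₂ V V' = β V V' :=
      fun V V' hVV' => (fam_R hs hαs hαt h4 hVV' (hB2 V V' hVV')).1
    have hfam' : sameTypeFam α₂ B2 B β₂ T :=
      fun V V' hVV' => (fam_R hs hαs hαt h4 hVV' (hB2 V V' hVV')).2
    have hP2P : ∀ V V', α₂ V V' →
        ∃ k, Eval (subst P2 0 V) (num k) ∧ Eval (subst P 0 V) (num k) := by
      intro V V' hVV'
      obtain ⟨k1, a1, b1⟩ := sameComp_omega_iff.1 (hP2 V V' hVV')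
      obtain ⟨k2, a2, b2⟩ := sameComp_omega_iff.1 (h5 V V' hVV')
      rw [← num_inj (eval_det b2 b1)] at a1
      exact ⟨k2, a1, a2⟩
    have hP2Pop : sameCompOpen α₂ P2 P (fun _ _ => omegaRel) := by
      intro V V' hVV'
      have hV'V' : α₂ V' V' := hαt (hαs hVV') hVV'
      exact sameComp_trans omegaRel_trans (hP2 V V' hVV')
        (sameComp_symm omegaRel_symm (h5 V' V' hV'V'))
    exact ⟨mkFt_congr hαs hαt hβeq hP2P,
      hTm (typesOp_of_ft (ftCl_intro hA21 hfam' hP2Pop))⟩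

end Funtime

/-! ### Main closure and goodness of the least fixed point -/

lemma good_closed {v T s : PTS} (hv : VOk v) (hT : TypesOp v T = T)
    (hs : ∀ y ∈ s, GoodIn T y) : ∀ x ∈ TypesOp v s, GoodIn T x := by
  rintro ⟨X, Y, φ⟩ hx
  rcases typesOp_cases hx with h|h|h|h|h|h|h|h|h
  · obtain ⟨rfl, rfl, rfl⟩ := h
    exact good_nat hv hT
  · obtain ⟨A, A', B, B', α, β, rfl, rfl, h3, h4, rfl⟩ := h
    exact good_pi hv hT hs h3 h4
  · obtain ⟨A, A', B, B', P, P', α, β, rfl, rfl, h3, h4, h5, rfl⟩ := h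
    exact good_ft hv hT hs h3 h4 h5
  · obtain ⟨A, A', B, B', α, β, rfl, rfl, h3, h4, rfl⟩ := h
    exact good_sg hv hT hs h3 h4
  · obtain ⟨A, A', M, M', N, N', α, rfl, rfl, h3, h4, h5, rfl⟩ := h
    exact good_eq hv hT hs h3 h4 h5
  · obtain ⟨A, A', B, B', α, β, rfl, rfl, h3, h4, rfl⟩ := h
    exact good_sub' hv hT hs h3 h4
  · obtain ⟨r, M, M', N, N', rfl, rfl, h3, h4, rfl⟩ := h
    exact good_r2 hv hT h3 h4
  · obtain ⟨r, M, M', N, N', O, O', rfl, rfl, h3, h4, h5, rfl⟩ := h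
    exact good_r3 hv hT h3 h4 h5
  · exact good_univ hv hT h

theorem lfp_good {v : PTS} (hv : VOk v) :
    ∀ x ∈ myLfp (TypesOp v), GoodIn (myLfp (TypesOp v)) x := by
  have hT : TypesOp v (myLfp (TypesOp v)) = myLfp (TypesOp v) :=
    myLfp_fixed (typesOp_mono v)
  intro x hx
  exact myLfp_le (s := {y | GoodIn (myLfp (TypesOp v)) y})
    (fun y hy => good_closed hv hT (fun z hz => hz) y hy) hx

theorem good_isTypeSystem {T : PTS} (hg : ∀ x ∈ T, GoodIn T x) :
    IsTypeSystem T := by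
  refine ⟨?_, ?_, ?_, ?_⟩
  · intro A B φ φ' h h'
    exact ((hg _ h).funL B φ' h').1.symm
  · intro A B φ h
    exact ⟨(hg _ h).vsym, (hg _ h).vtrans⟩
  · intro A B φ h
    exact (hg _ h).smem
  · intro A B C φ h h'
    exact (hg _ (((hg _ h').funL A φ ((hg _ h).smem)).2)).smem

lemma vok_isTypeSystem {w : PTS} (hw : VOk w) : IsTypeSystem w := by
  refine ⟨?_, ?_, ?_, ?_⟩
  · intro A B φ φ' h h'
    obtain ⟨i, φ0, he, -, -, huniq⟩ := hw _ h
    simp only [Prod.mk.injEq] at he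
    obtain ⟨rfl, rfl, rfl⟩ := he
    exact (huniq φ h).trans (huniq φ' h').symm
  · intro A B φ h
    obtain ⟨i, φ0, he, hsy, htr, -⟩ := hw _ h
    simp only [Prod.mk.injEq] at he
    obtain ⟨rfl, rfl, rfl⟩ := he
    exact ⟨hsy, htr⟩
  · intro A B φ h
    obtain ⟨i, φ0, he, -, -, -⟩ := hw _ h
    simp only [Prod.mk.injEq] at he
    obtain ⟨rfl, rfl, rfl⟩ := he
    exact h
  · intro A B C φ h h'
    obtain ⟨i, φ0, he, -, -, -⟩ := hw _ h
    simp only [Prod.mk.injEq] at he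
    obtain ⟨rfl, rfl, rfl⟩ := he
    obtain ⟨j, φ1, he', -, -, -⟩ := hw _ h'
    simp only [Prod.mk.injEq, Exp.univ.injEq] at he'
    obtain ⟨rfl, rfl, -⟩ := he'
    exact h

/-! ### The hierarchy -/

lemma strongRecOn_beta {motive : ℕ → Sort _} {n : ℕ}
    {ind : ∀ n, (∀ m, m < n → motive m) → motive n} :
    (Nat.strongRecOn n ind : motive n) = ind n (fun m _ => Nat.strongRecOn m ind) := by
  show WellFounded.fix _ _ _ = _
  rw [WellFounded.fix_eq]
  rfl

lemma tau_eq (n : ℕ) : tau n = tauN n := by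
  simp only [tau]
  rw [strongRecOn_beta]
  have hS : {x : Exp × Exp × Rel | ∃ i, ∃ _ : i < n,
      x = (Exp.univ i, Exp.univ i, fun A B => ∃ α, (A, B, α) ∈ tau i)} = vN n := by
    ext x
    constructor
    · rintro ⟨i, hi, rfl⟩
      exact ⟨i, hi, rfl⟩
    · rintro ⟨i, hi, rfl⟩
      exact ⟨i, hi, rfl⟩
  show myLfp (TypesOp {x : Exp × Exp × Rel | ∃ i, ∃ _ : i < n,
      x = (Exp.univ i, Exp.univ i, fun A B => ∃ α, (A, B, α) ∈ tau i)}) = tauN n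
  rw [hS]
  rfl

lemma vOk_vN (n : ℕ) (ih : ∀ m, m < n → ∀ x ∈ tauN m, GoodIn (tauN m) x) :
    VOk (vN n) := by
  rintro x ⟨i, hi, rfl⟩
  refine ⟨i, _, rfl, ?_, ?_, ?_⟩
  · rintro a b ⟨α, h⟩
    rw [tau_eq] at h
    refine ⟨α, ?_⟩
    rw [tau_eq]
    exact (ih i hi _ h).smem
  · rintro a b c ⟨α, h1⟩ ⟨α', h2⟩
    rw [tau_eq] at h1 h2
    refine ⟨α, ?_⟩
    rw [tau_eq]
    exact (ih i hi _ (((ih i hi _ h2).funL a α ((ih i hi _ h1).smem)).2)).smem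
  · rintro ψ ⟨j, hj, he⟩
    simp only [Prod.mk.injEq, Exp.univ.injEq] at he
    obtain ⟨rfl, -, he3⟩ := he
    exact he3

lemma tauN_good : ∀ n, ∀ x ∈ tauN n, GoodIn (tauN n) x :=
  Nat.strongRec' (fun n ih => lfp_good (vOk_vN n ih))

end CATT

namespace CATT

/-- Hierarchy: for all `n`, the possible type systems `vₙ` and `τₙ`
are type systems. -/
theorem hierarchy_isTypeSystem (n : ℕ) :
    IsTypeSystem (vN n) ∧ IsTypeSystem (tauN n) := by
  have hv : VOk (vN n) := vOk_vN n (fun i _ => tauN_good i)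
  exact ⟨vok_isTypeSystem hv, good_isTypeSystem (tauN_good n)⟩

end CATT
end

section
/- Replacement for cost-aware membership: if M ≐ M' ∈ α with cost bound P, and M₁ steps to M in c₁ steps, M₂ steps to M' in c₂ steps, and Q evaluates to numeral q̄ with q ≥ max(c₁,c₂), then M₁ ≐ M₂ ∈ α with cost bound Q + P (where + is the numeral addition operation satisfying Q + P ⇓ (q+p) when Q ⇓ q̄ and P ⇓ p̄). -/
namespace CATT

open Exp

lemma stepN_trans {a b : ℕ} {M N O : Exp} (h1 : StepN a M N) (h2 : StepN b N O) :
    StepN (a + b) M O := by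
  induction h1 with
  | refl e => simpa using h2
  | tail s _ ih =>
      have := StepN.tail s (ih h2)
      simpa [Nat.add_right_comm] using this

lemma stepN_cong {a : ℕ} {M N : Exp} (F : Exp → Exp)
    (hF : ∀ {x y}, Step x y → Step (F x) (F y))
    (h : StepN a M N) : StepN a (F M) (F N) := by
  induction h with
  | refl e => exact StepN.refl _
  | tail s _ ih => exact StepN.tail (hF s) ih

lemma num_isVal (n : ℕ) : IsVal (num n) := by
  induction n with
  | zero => exact IsVal.zero
  | succ n ih => exact IsVal.suc ih

lemma omegaRel_num (n : ℕ) : omegaRel (num n) (num n) := by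
  intro s hs
  induction n with
  | zero => exact hs (Or.inl rfl)
  | succ n ih => exact hs (Or.inr ⟨num n, num n, ih, rfl⟩)

lemma eval_cff2_add {Q P : Exp} {q p : ℕ}
    (hQ : Eval Q (num q)) (hP : Eval P (num p)) :
    Eval (cff2 (fun a b => a + b) Q P) (num (q + p)) := by
  obtain ⟨cq, hq1, _⟩ := hQ
  obtain ⟨cp, hp1, _⟩ := hP
  refine ⟨cq + cp + 1, ?_, num_isVal _⟩
  have s1 : StepN cq (cff2 (fun a b => a + b) Q P)
      (cff2 (fun a b => a + b) (num q) P) :=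
    stepN_cong _ (fun hs => Step.cff2Arg1 hs) hq1
  have s2 : StepN cp (cff2 (fun a b => a + b) (num q) P)
      (cff2 (fun a b => a + b) (num q) (num p)) :=
    stepN_cong _ (fun hs => Step.cff2Arg2 (num_isVal q) hs) hp1
  have s3 : StepN 1 (cff2 (fun a b => a + b) (num q) (num p)) (num (q + p)) :=
    StepN.tail Step.cff2Beta (StepN.refl _)
  simpa [Nat.add_assoc] using stepN_trans s1 (stepN_trans s2 s3)

/-- Replacement for cost-aware membership: if `M ≐ M' ∈ α [P]`,
`M₁ ↦^{c₁} M`, `M₂ ↦^{c₂} M'`, and `Q ⇓ q̄` with `q ≥ max(c₁,c₂)`,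
then `M₁ ≐ M₂ ∈ α [Q +̂ P]` (foreign-function numeral addition). -/
theorem replacement_cost (M M' M₁ M₂ P Q : Exp) (α : Rel) (c₁ c₂ q : ℕ)
    (h : sameCComp M M' α P)
    (h₁ : StepN c₁ M₁ M) (h₂ : StepN c₂ M₂ M')
    (hQ : Eval Q (num q)) (hq : max c₁ c₂ ≤ q) :
    sameCComp M₁ M₂ α (cff2 (fun a b => a + b) Q P) := by
  obtain ⟨_, c, c', V, V', p, hM, hM', hα, hP, hp⟩ := h
  have hEval := eval_cff2_add hQ hP
  constructor
  · exact ⟨num (q + p), num (q + p), hEval, hEval, omegaRel_num _⟩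
  · refine ⟨c₁ + c, c₂ + c', V, V', q + p,
      ⟨stepN_trans h₁ hM.1, hM.2⟩, ⟨stepN_trans h₂ hM'.1, hM'.2⟩, hα, hEval, ?_⟩
    omega

end CATT
end
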